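/- arXiv:1701.07995 — 10 statements merged into one kernel-verified Lean document; each statement's English description precedes it below -/
import Mathlib

section
/- The weak order on reflexive integer binary relations of size n is a graded lattice: for relations R, S on [n], the meet is (Inc(R) ∪ Inc(S)) ∪ (Dec(R) ∩ Dec(S)) and the join is (Inc(R) ∩ Inc(S)) ∪ (Dec(R) ∪ Dec(S)). -/
/-- Increasing part of an integer binary relation. -/
def IncR {n : ℕ} (R : Set (Fin n × Fin n)) : Set (Fin n × Fin n) := {p | p ∈ R ∧ p.1 ≤ p.2}

/-- Decreasing part of an integer binary relation. -/
def DecR {n : ℕ} (R : Set (Fin n × Fin n)) : Set (Fin n × Fin n) := {p | p ∈ R ∧ p.2 ≤ p.1}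

/-- Reflexivity of a relation on `Fin n`. -/
def IsReflRel {n : ℕ} (R : Set (Fin n × Fin n)) : Prop := ∀ a : Fin n, (a, a) ∈ R

/-- Transitivity. -/
def IsTransRel {n : ℕ} (R : Set (Fin n × Fin n)) : Prop :=
  ∀ u v w : Fin n, (u, v) ∈ R → (v, w) ∈ R → (u, w) ∈ R

/-- Antisymmetry. -/
def IsAntisymRel {n : ℕ} (R : Set (Fin n × Fin n)) : Prop :=
  ∀ u v : Fin n, (u, v) ∈ R → (v, u) ∈ R → u = v

/-- The weak order on integer binary relations. -/
def WOLE {n : ℕ} (R S : Set (Fin n × Fin n)) : Prop := IncR S ⊆ IncR R ∧ DecR R ⊆ DecR S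

/-- Meet in the weak order on integer binary relations. -/
def meetR {n : ℕ} (R S : Set (Fin n × Fin n)) : Set (Fin n × Fin n) :=
  (IncR R ∪ IncR S) ∪ (DecR R ∩ DecR S)

/-- Join in the weak order on integer binary relations. -/
def joinR {n : ℕ} (R S : Set (Fin n × Fin n)) : Set (Fin n × Fin n) :=
  (IncR R ∩ IncR S) ∪ (DecR R ∪ DecR S)

/-- Rank function of the weak order. -/
noncomputable def rankR {n : ℕ} (R : Set (Fin n × Fin n)) : ℤ :=
  ((DecR R).ncard : ℤ) - ((IncR R).ncard : ℤ)

/-- Cover relations of the weak order on reflexive relations. -/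
def CoversRefl {n : ℕ} (R S : Set (Fin n × Fin n)) : Prop :=
  WOLE R S ∧ R ≠ S ∧
    ∀ T : Set (Fin n × Fin n), IsReflRel T → WOLE R T → WOLE T S → T = R ∨ T = S

/-! For reflexive relations the diagonal lies in both parts, so the meet and join formulas have
increasing part `Inc R ∪ Inc S` resp. `Inc R ∩ Inc S` and decreasing part `Dec R ∩ Dec S`
resp. `Dec R ∪ Dec S`; the lattice properties are then those of `Set`.
If `R < S`, some off-diagonal pair lies in `Dec S \ Dec R` or in `Inc R \ Inc S`; adding it to
resp. removing it from `R` gives a relation between `R` and `S` of rank `rank R + 1`, which must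
be `S` when `S` covers `R`. -/

section WeakOrder

variable {n : ℕ} {R S T : Set (Fin n × Fin n)} {p : Fin n × Fin n}

theorem IsReflRel.mem_of_fst_eq_snd (hR : IsReflRel R) (h : p.1 = p.2) : p ∈ R := by
  obtain ⟨a, b⟩ := p
  cases h
  exact hR a

theorem IsReflRel.fst_lt_snd (hS : IsReflRel S) (hp : p ∈ IncR R) (hpS : p ∉ IncR S) :
    p.1 < p.2 :=
  hp.2.lt_of_ne fun h => hpS ⟨hS.mem_of_fst_eq_snd h, hp.2⟩

theorem IsReflRel.snd_lt_fst (hR : IsReflRel R) (hp : p ∈ DecR S) (hpR : p ∉ DecR R) :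
    p.2 < p.1 :=
  hp.2.lt_of_ne fun h => hpR ⟨hR.mem_of_fst_eq_snd h.symm, hp.2⟩

theorem incR_union_decR (R : Set (Fin n × Fin n)) : IncR R ∪ DecR R = R := by
  ext p
  simp only [IncR, DecR, Set.mem_union, Set.mem_ofPred_eq, ← and_or_left, le_total, and_true]

theorem WOLE.refl (R : Set (Fin n × Fin n)) : WOLE R R :=
  ⟨subset_rfl, subset_rfl⟩

theorem WOLE.trans (hRS : WOLE R S) (hST : WOLE S T) : WOLE R T :=
  ⟨hST.1.trans hRS.1, hRS.2.trans hST.2⟩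

theorem WOLE.antisymm (hRS : WOLE R S) (hSR : WOLE S R) : R = S := by
  rw [← incR_union_decR R, ← incR_union_decR S, hSR.1.antisymm hRS.1, hRS.2.antisymm hSR.2]

theorem IsReflRel.meetR (hR : IsReflRel R) : IsReflRel (meetR R S) :=
  fun a => Or.inl (Or.inl ⟨hR a, le_rfl⟩)

theorem IsReflRel.joinR (hR : IsReflRel R) : IsReflRel (joinR R S) :=
  fun a => Or.inr (Or.inl ⟨hR a, le_rfl⟩)

theorem incR_meetR : IncR (meetR R S) = IncR R ∪ IncR S := by
  ext p
  simp only [IncR, DecR, meetR, Set.mem_union, Set.mem_inter_iff, Set.mem_ofPred_eq]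
  grind

theorem decR_meetR (hR : IsReflRel R) (hS : IsReflRel S) :
    DecR (meetR R S) = DecR R ∩ DecR S := by
  ext p
  simp only [IncR, DecR, meetR, Set.mem_union, Set.mem_inter_iff, Set.mem_ofPred_eq]
  grind [hR.mem_of_fst_eq_snd, hS.mem_of_fst_eq_snd]

theorem incR_joinR (hR : IsReflRel R) (hS : IsReflRel S) :
    IncR (joinR R S) = IncR R ∩ IncR S := by
  ext p
  simp only [IncR, DecR, joinR, Set.mem_union, Set.mem_inter_iff, Set.mem_ofPred_eq]
  grind [hR.mem_of_fst_eq_snd, hS.mem_of_fst_eq_snd]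

theorem decR_joinR : DecR (joinR R S) = DecR R ∪ DecR S := by
  ext p
  simp only [IncR, DecR, joinR, Set.mem_union, Set.mem_inter_iff, Set.mem_ofPred_eq]
  grind

theorem wole_meetR_iff (hR : IsReflRel R) (hS : IsReflRel S) :
    WOLE T (meetR R S) ↔ WOLE T R ∧ WOLE T S := by
  simp only [WOLE, incR_meetR, decR_meetR hR hS, Set.union_subset_iff, Set.subset_inter_iff]
  tauto

theorem joinR_wole_iff (hR : IsReflRel R) (hS : IsReflRel S) :
    WOLE (joinR R S) T ↔ WOLE R T ∧ WOLE S T := by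
  simp only [WOLE, incR_joinR hR hS, decR_joinR, Set.union_subset_iff, Set.subset_inter_iff]
  tauto

theorem incR_insert_of_snd_lt (h : p.2 < p.1) : IncR (insert p R) = IncR R := by
  ext q
  simp only [IncR, Set.mem_insert_iff, Set.mem_ofPred_eq]
  grind

theorem decR_insert_of_snd_le (h : p.2 ≤ p.1) : DecR (insert p R) = insert p (DecR R) := by
  ext q
  simp only [DecR, Set.mem_insert_iff, Set.mem_ofPred_eq]
  grind

theorem incR_diff_singleton : IncR (R \ {p}) = IncR R \ {p} := by
  ext q
  simp only [IncR, Set.mem_sdiff, Set.mem_singleton_iff, Set.mem_ofPred_eq]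
  tauto

theorem decR_diff_singleton_of_fst_lt (h : p.1 < p.2) : DecR (R \ {p}) = DecR R := by
  ext q
  simp only [DecR, Set.mem_sdiff, Set.mem_singleton_iff, Set.mem_ofPred_eq]
  grind

theorem wole_insert (h : p.2 < p.1) : WOLE R (insert p R) := by
  rw [WOLE, incR_insert_of_snd_lt h, decR_insert_of_snd_le h.le]
  exact ⟨subset_rfl, Set.subset_insert p _⟩

theorem insert_wole (hRS : WOLE R S) (hp : p ∈ DecR S) (h : p.2 < p.1) :
    WOLE (insert p R) S := by
  rw [WOLE, incR_insert_of_snd_lt h, decR_insert_of_snd_le h.le]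
  exact ⟨hRS.1, Set.insert_subset hp hRS.2⟩

theorem rankR_insert (hp : p ∉ DecR R) (h : p.2 < p.1) : rankR (insert p R) = rankR R + 1 := by
  rw [rankR, rankR, incR_insert_of_snd_lt h, decR_insert_of_snd_le h.le,
    Set.ncard_insert_of_notMem hp]
  push_cast
  ring

theorem wole_diff_singleton (h : p.1 < p.2) : WOLE R (R \ {p}) := by
  rw [WOLE, incR_diff_singleton, decR_diff_singleton_of_fst_lt h]
  exact ⟨Set.sdiff_subset, subset_rfl⟩

theorem diff_singleton_wole (hRS : WOLE R S) (hp : p ∉ IncR S) (h : p.1 < p.2) :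
    WOLE (R \ {p}) S := by
  rw [WOLE, incR_diff_singleton, decR_diff_singleton_of_fst_lt h]
  exact ⟨Set.subset_sdiff_singleton hRS.1 hp, hRS.2⟩

theorem rankR_diff_singleton (hp : p ∈ IncR R) (h : p.1 < p.2) :
    rankR (R \ {p}) = rankR R + 1 := by
  rw [rankR, rankR, incR_diff_singleton, decR_diff_singleton_of_fst_lt h,
    ← Set.ncard_sdiff_singleton_add_one hp]
  push_cast
  ring

theorem IsReflRel.diff_singleton (hR : IsReflRel R) (h : p.1 < p.2) :
    IsReflRel (R \ {p}) :=
  fun a => ⟨hR a, by rintro rfl; exact h.ne rfl⟩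

theorem exists_wole_rankR_eq_add_one (hR : IsReflRel R) (hS : IsReflRel S) (hRS : WOLE R S)
    (hne : R ≠ S) :
    ∃ T, IsReflRel T ∧ WOLE R T ∧ WOLE T S ∧ rankR T = rankR R + 1 := by
  have hSR : ¬ WOLE S R := fun hSR => hne (hRS.antisymm hSR)
  rw [WOLE, not_and_or, Set.not_subset, Set.not_subset] at hSR
  rcases hSR with ⟨p, hpR, hpS⟩ | ⟨p, hpS, hpR⟩
  · have h := hS.fst_lt_snd hpR hpS
    exact ⟨R \ {p}, hR.diff_singleton h, wole_diff_singleton h, diff_singleton_wole hRS hpS h,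
      rankR_diff_singleton hpR h⟩
  · have h := hR.snd_lt_fst hpS hpR
    exact ⟨insert p R, fun a => Or.inr (hR a), wole_insert h, insert_wole hRS hpS h,
      rankR_insert hpR h⟩

theorem CoversRefl.rankR_eq (hR : IsReflRel R) (hS : IsReflRel S) (hRS : CoversRefl R S) :
    rankR S = rankR R + 1 := by
  obtain ⟨hle, hne, hcover⟩ := hRS
  obtain ⟨T, hT, hRT, hTS, hrank⟩ := exists_wole_rankR_eq_add_one hR hS hle hne
  rcases hcover T hT hRT hTS with rfl | rfl
  · omega
  · exact hrank

end WeakOrder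

/-- The weak order on reflexive integer binary relations of size n is a graded lattice,
with the stated meet and join. -/
theorem weakOrder_relations_graded_lattice (n : ℕ) :
    (∀ R : Set (Fin n × Fin n), WOLE R R) ∧
    (∀ R S : Set (Fin n × Fin n), IsReflRel R → IsReflRel S → WOLE R S → WOLE S R → R = S) ∧
    (∀ R S T : Set (Fin n × Fin n), WOLE R S → WOLE S T → WOLE R T) ∧
    (∀ R S : Set (Fin n × Fin n), IsReflRel R → IsReflRel S →
      IsReflRel (meetR R S) ∧ WOLE (meetR R S) R ∧ WOLE (meetR R S) S ∧
        (∀ T : Set (Fin n × Fin n), IsReflRel T → WOLE T R → WOLE T S → WOLE T (meetR R S)) ∧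
      IsReflRel (joinR R S) ∧ WOLE R (joinR R S) ∧ WOLE S (joinR R S) ∧
        (∀ T : Set (Fin n × Fin n), IsReflRel T → WOLE R T → WOLE S T → WOLE (joinR R S) T)) ∧
    (∀ R S : Set (Fin n × Fin n), IsReflRel R → IsReflRel S → CoversRefl R S →
      rankR S = rankR R + 1) := by
  refine ⟨WOLE.refl, fun R S _ _ => WOLE.antisymm, fun R S T => WOLE.trans,
    fun R S hR hS => ?_, fun R S => CoversRefl.rankR_eq⟩
  have hmeet := (wole_meetR_iff hR hS).1 (WOLE.refl (meetR R S))
  have hjoin := (joinR_wole_iff hR hS).1 (WOLE.refl (joinR R S))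
  exact ⟨hR.meetR, hmeet.1, hmeet.2, fun T _ hTR hTS => (wole_meetR_iff hR hS).2 ⟨hTR, hTS⟩,
    hR.joinR, hjoin.1, hjoin.2, fun T _ hRT hST => (joinR_wole_iff hR hS).2 ⟨hRT, hST⟩⟩
end

section
/- If R and S are reflexive antisymmetric relations on [n], then their weak order meet (Inc(R) ∪ Inc(S)) ∪ (Dec(R) ∩ Dec(S)) is antisymmetric, and similarly their weak order join (Inc(R) ∩ Inc(S)) ∪ (Dec(R) ∪ Dec(S)) is antisymmetric. Hence antisymmetric relations form a sublattice of the weak order on integer binary relations. -/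
section

variable {n : ℕ} {R S : Set (Fin n × Fin n)}

theorem meetR_subset_union : meetR R S ⊆ R ∪ S := by
  rintro p ((hp | hp) | hp)
  exacts [Or.inl hp.1, Or.inr hp.1, Or.inl hp.1.1]

theorem joinR_subset_union : joinR R S ⊆ R ∪ S := by
  rintro p (hp | hp | hp)
  exacts [Or.inl hp.1.1, Or.inl hp.1, Or.inr hp.1]

theorem mem_inter_of_mem_meetR_of_lt {a b : Fin n} (hba : b < a) (hp : (a, b) ∈ meetR R S) :
    (a, b) ∈ R ∩ S := by
  rcases hp with (hp | hp) | hp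
  · exact absurd hp.2 hba.not_ge
  · exact absurd hp.2 hba.not_ge
  · exact ⟨hp.1.1, hp.2.1⟩

theorem mem_inter_of_mem_joinR_of_lt {a b : Fin n} (hab : a < b) (hp : (a, b) ∈ joinR R S) :
    (a, b) ∈ R ∩ S := by
  rcases hp with hp | hp | hp
  · exact ⟨hp.1.1, hp.2.1⟩
  · exact absurd hp.2 hab.not_ge
  · exact absurd hp.2 hab.not_ge

theorem eq_of_mem_union_of_mem_inter (haR : IsAntisymRel R) (haS : IsAntisymRel S)
    {a b : Fin n} (hab : (a, b) ∈ R ∪ S) (hba : (b, a) ∈ R ∩ S) : a = b :=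
  hab.elim (fun h => haR a b h hba.1) (fun h => haS a b h hba.2)

theorem IsAntisymRel.of_lt {T : Set (Fin n × Fin n)}
    (h : ∀ a b, a < b → (a, b) ∈ T → (b, a) ∈ T → a = b) : IsAntisymRel T := by
  intro a b hab hba
  rcases lt_trichotomy a b with hlt | heq | hgt
  · exact h a b hlt hab hba
  · exact heq
  · exact (h b a hgt hba hab).symm

theorem isAntisymRel_meetR (haR : IsAntisymRel R) (haS : IsAntisymRel S) :
    IsAntisymRel (meetR R S) :=
  IsAntisymRel.of_lt fun _ _ hab h₁ h₂ =>
    eq_of_mem_union_of_mem_inter haR haS (meetR_subset_union h₁)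
      (mem_inter_of_mem_meetR_of_lt hab h₂)

theorem isAntisymRel_joinR (haR : IsAntisymRel R) (haS : IsAntisymRel S) :
    IsAntisymRel (joinR R S) :=
  IsAntisymRel.of_lt fun _ _ hab h₁ h₂ =>
    (eq_of_mem_union_of_mem_inter haR haS (joinR_subset_union h₂)
      (mem_inter_of_mem_joinR_of_lt hab h₁)).symm

end

theorem meetR_joinR_antisym_general (n : ℕ) (R S : Set (Fin n × Fin n))
    (haR : IsAntisymRel R) (haS : IsAntisymRel S) :
    IsAntisymRel (meetR R S) ∧ IsAntisymRel (joinR R S) :=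
  ⟨isAntisymRel_meetR haR haS, isAntisymRel_joinR haR haS⟩

/-- The weak order meet and join of two reflexive antisymmetric relations are
antisymmetric: antisymmetric relations form a sublattice of the weak order. -/
theorem meetR_joinR_antisym (n : ℕ) (R S : Set (Fin n × Fin n))
    (hR : IsReflRel R) (hS : IsReflRel S)
    (haR : IsAntisymRel R) (haS : IsAntisymRel S) :
    IsAntisymRel (meetR R S) ∧ IsAntisymRel (joinR R S) :=
  meetR_joinR_antisym_general n R S haR haS
end

section
/- In the weak order restricted to reflexive antisymmetric relations on [n], the relations covering a given antisymmetric relation R are exactly: (1) R \ {(a,b)} for a < b with a R b, and (2) R ∪ {(b,a)} for a < b with neither a R b nor b R a. -/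
/-- Cover relations of the weak order restricted to reflexive antisymmetric relations. -/
def CoversAS {n : ℕ} (R S : Set (Fin n × Fin n)) : Prop :=
  WOLE R S ∧ R ≠ S ∧
    ∀ T : Set (Fin n × Fin n), IsReflRel T → IsAntisymRel T →
      WOLE R T → WOLE T S → T = R ∨ T = S

/-!
A pair `p ∈ R` with `p.2 ≤ p.1` stays in every relation above `R`, and a pair `p ∉ R` with
`p.1 ≤ p.2` stays out of it. Hence if `R ≤ T ≤ S` then `R ∩ S ⊆ T ⊆ R ∪ S`, so relations
differing from `R` in a single pair are covers. Conversely, let `S` cover `R`. If some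
increasing pair of `R` is missing from `S`, deleting it from `R` gives an antisymmetric relation
between `R` and `S`, which must be `S`. Otherwise `R ⊊ S`, and any pair of `S \ R` is strictly
decreasing, say `(b, a)`; antisymmetry of `S` gives `(a, b) ∉ R`, so adding `(b, a)` to `R`
again gives an antisymmetric relation between `R` and `S`, which must be `S`.
-/

variable {n : ℕ} {R S T : Set (Fin n × Fin n)} {a b : Fin n}

lemma IsReflRel.mono (hR : IsReflRel R) (h : R ⊆ T) : IsReflRel T :=
  fun c => h (hR c)

lemma IsReflRel.diff_singleton_s3 (hR : IsReflRel R) (hab : a ≠ b) : IsReflRel (R \ {(a, b)}) :=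
  fun c => ⟨hR c, by rintro ⟨⟩; exact hab rfl⟩

lemma IsAntisymRel.mono (hR : IsAntisymRel R) (h : T ⊆ R) : IsAntisymRel T :=
  fun u v huv hvu => hR u v (h huv) (h hvu)

lemma IsAntisymRel.union_singleton (hR : IsAntisymRel R) (hab : (a, b) ∉ R) :
    IsAntisymRel (R ∪ {(b, a)}) := by
  rintro u v (huv | huv) (hvu | hvu)
  · exact hR u v huv hvu
  · obtain ⟨rfl, rfl⟩ := Prod.ext_iff.mp hvu
    exact absurd huv hab
  · obtain ⟨rfl, rfl⟩ := Prod.ext_iff.mp huv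
    exact absurd hvu hab
  · exact (Prod.ext_iff.mp huv).1.trans (Prod.ext_iff.mp hvu).1.symm

lemma WOLE.inter_subset (hRT : WOLE R T) (hTS : WOLE T S) : R ∩ S ⊆ T := fun p ⟨hpR, hpS⟩ =>
  (le_total p.1 p.2).elim (fun hle => (hTS.1 ⟨hpS, hle⟩).1) (fun hle => (hRT.2 ⟨hpR, hle⟩).1)

lemma WOLE.subset_union (hRT : WOLE R T) (hTS : WOLE T S) : T ⊆ R ∪ S := fun p hpT =>
  (le_total p.1 p.2).elim (fun hle => .inl (hRT.1 ⟨hpT, hle⟩).1)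
    (fun hle => .inr (hTS.2 ⟨hpT, hle⟩).1)

lemma WOLE.lt_of_mem_of_notMem {p : Fin n × Fin n} (h : WOLE R S) (hpR : p ∈ R) (hpS : p ∉ S) :
    p.1 < p.2 :=
  not_le.mp fun hle => hpS (h.2 ⟨hpR, hle⟩).1

lemma WOLE.lt_of_notMem_of_mem {p : Fin n × Fin n} (h : WOLE R S) (hpR : p ∉ R) (hpS : p ∈ S) :
    p.2 < p.1 :=
  not_le.mp fun hle => hpR (h.1 ⟨hpS, hle⟩).1

lemma wole_diff_singleton_s3 (hab : a < b) : WOLE R (R \ {(a, b)}) := by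
  refine ⟨fun _ hp => ⟨hp.1.1, hp.2⟩, fun p hp => ⟨⟨hp.1, ?_⟩, hp.2⟩⟩
  rintro rfl
  exact hab.not_ge hp.2

lemma wole_union_singleton (hab : a < b) : WOLE R (R ∪ {(b, a)}) := by
  refine ⟨?_, fun _ hp => ⟨.inl hp.1, hp.2⟩⟩
  rintro p ⟨hpR | rfl, hle⟩
  exacts [⟨hpR, hle⟩, absurd hle hab.not_ge]

lemma WOLE.diff_singleton_left (h : WOLE R S) (habS : (a, b) ∉ S) : WOLE (R \ {(a, b)}) S := by
  refine ⟨fun p hp => ⟨⟨(h.1 hp).1, ?_⟩, hp.2⟩, fun _ hp => h.2 ⟨hp.1.1, hp.2⟩⟩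
  rintro rfl
  exact habS hp.1

lemma WOLE.union_singleton_left (h : WOLE R S) (hbaS : (b, a) ∈ S) (hab : a ≤ b) :
    WOLE (R ∪ {(b, a)}) S := by
  refine ⟨fun _ hp => ⟨.inl (h.1 hp).1, hp.2⟩, ?_⟩
  rintro p ⟨hpR | rfl, hle⟩
  exacts [h.2 ⟨hpR, hle⟩, ⟨hbaS, hab⟩]

lemma CoversAS.eq_of_wole (h : CoversAS R S) (hT : IsReflRel T) (haT : IsAntisymRel T)
    (hRT : WOLE R T) (hTS : WOLE T S) (hTR : T ≠ R) : S = T :=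
  ((h.2.2 T hT haT hRT hTS).resolve_left hTR).symm

lemma coversAS_diff_singleton (hab : a < b) (habR : (a, b) ∈ R) : CoversAS R (R \ {(a, b)}) := by
  refine ⟨wole_diff_singleton_s3 hab, fun h => (h ▸ habR).2 rfl, fun T _ _ hRT hTS => ?_⟩
  have hlo : R \ {(a, b)} ⊆ T := fun p hp => hRT.inter_subset hTS ⟨hp.1, hp⟩
  have hhi : T ⊆ R := fun p hp => (hRT.subset_union hTS hp).elim id (·.1)
  exact ((Set.sdiff_singleton_wcovBy R (a, b)).eq_or_eq hlo hhi).symm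

lemma coversAS_union_singleton (hab : a < b) (hbaR : (b, a) ∉ R) : CoversAS R (R ∪ {(b, a)}) := by
  refine ⟨wole_union_singleton hab, fun h => hbaR (h ▸ .inr rfl), fun T _ _ hRT hTS => ?_⟩
  have hlo : R ⊆ T := fun p hp => hRT.inter_subset hTS ⟨hp, .inl hp⟩
  have hhi : T ⊆ R ∪ {(b, a)} := fun p hp => (hRT.subset_union hTS hp).elim .inl id
  rw [Set.union_singleton] at hhi ⊢
  exact (Set.wcovBy_insert (b, a) R).eq_or_eq hlo hhi

theorem covers_antisym_characterization_general (n : ℕ) (R S : Set (Fin n × Fin n))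
    (hR : IsReflRel R) (haR : IsAntisymRel R)
    (haS : IsAntisymRel S) :
    CoversAS R S ↔
      ((∃ a b : Fin n, a < b ∧ (a, b) ∈ R ∧ S = R \ {(a, b)}) ∨
       (∃ a b : Fin n, a < b ∧ (a, b) ∉ R ∧ (b, a) ∉ R ∧ S = R ∪ {(b, a)})) := by
  refine ⟨fun h => ?_, ?_⟩
  · have ⟨hRS, hne, _⟩ := h
    by_cases hinc : ∃ a b : Fin n, a < b ∧ (a, b) ∈ R ∧ (a, b) ∉ S
    · obtain ⟨a, b, hab, habR, habS⟩ := hinc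
      refine .inl ⟨a, b, hab, habR, h.eq_of_wole (hR.diff_singleton_s3 hab.ne)
        (haR.mono Set.sdiff_subset) (wole_diff_singleton_s3 hab) (hRS.diff_singleton_left habS)
        fun hT => (hT ▸ habR).2 rfl⟩
    push Not at hinc
    have hsub : R ⊆ S := fun p hpR => by_contra fun hpS =>
      hpS (hinc p.1 p.2 (hRS.lt_of_mem_of_notMem hpR hpS) hpR)
    obtain ⟨⟨b, a⟩, hbaS, hbaR⟩ := Set.exists_of_ssubset (hsub.ssubset_of_ne hne)
    have hab : a < b := hRS.lt_of_notMem_of_mem hbaR hbaS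
    have habR : (a, b) ∉ R := fun habR => hab.ne (haS a b (hsub habR) hbaS)
    refine .inr ⟨a, b, hab, habR, hbaR, h.eq_of_wole (hR.mono Set.subset_union_left)
      (haR.union_singleton habR) (wole_union_singleton hab)
      (hRS.union_singleton_left hbaS hab.le) fun hT => hbaR (hT ▸ .inr rfl)⟩
  · rintro (⟨a, b, hab, habR, rfl⟩ | ⟨a, b, hab, -, hbaR, rfl⟩)
    exacts [coversAS_diff_singleton hab habR, coversAS_union_singleton hab hbaR]

/-- Characterization of the cover relations in the weak order on reflexive
antisymmetric relations. -/
theorem covers_antisym_characterization (n : ℕ) (R S : Set (Fin n × Fin n))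
    (hR : IsReflRel R) (haR : IsAntisymRel R)
    (hS : IsReflRel S) (haS : IsAntisymRel S) :
    CoversAS R S ↔
      ((∃ a b : Fin n, a < b ∧ (a, b) ∈ R ∧ S = R \ {(a, b)}) ∨
       (∃ a b : Fin n, a < b ∧ (a, b) ∉ R ∧ (b, a) ∉ R ∧ S = R ∪ {(b, a)})) :=
  covers_antisym_characterization_general n R S hR haR haS
end

section
/- The weak order on semitransitive reflexive relations on [n] is a lattice, with meet of R and S given by tc(Inc(R) ∪ Inc(S)) ∪ (Dec(R) ∩ Dec(S)) and join given by (Inc(R) ∩ Inc(S)) ∪ tc(Dec(R) ∪ Dec(S)), where tc denotes transitive closure. -/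
/-- Transitive closure of a relation. -/
def tcR {n : ℕ} (R : Set (Fin n × Fin n)) : Set (Fin n × Fin n) :=
  {p | Relation.TransGen (fun u v : Fin n => (u, v) ∈ R) p.1 p.2}

/-- A relation is semitransitive when both its increasing and decreasing parts
are transitive. -/
def IsSemiTransRel {n : ℕ} (R : Set (Fin n × Fin n)) : Prop :=
  IsTransRel (IncR R) ∧ IsTransRel (DecR R)

/-- Meet in the weak order on semitransitive relations. -/
def meetST {n : ℕ} (R S : Set (Fin n × Fin n)) : Set (Fin n × Fin n) :=
  tcR (IncR R ∪ IncR S) ∪ (DecR R ∩ DecR S)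

/-- Join in the weak order on semitransitive relations. -/
def joinST {n : ℕ} (R S : Set (Fin n × Fin n)) : Set (Fin n × Fin n) :=
  (IncR R ∩ IncR S) ∪ tcR (DecR R ∪ DecR S)

/-!
Gluing an increasing reflexive relation to a decreasing reflexive one gives a relation whose
increasing and decreasing parts are exactly the two pieces, since they overlap only on the
diagonal. `meetST R S` and `joinST R S` are such gluings, so in the weak order their parts are
compared separately, and everything reduces to two facts about transitive relations: the
transitive closure of a union is the least transitive relation containing it, and an
intersection of transitive relations is transitive.
-/

section

variable {n : ℕ} {A B : Set (Fin n × Fin n)}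

lemma IsReflRel.mono_s4 (hA : IsReflRel A) (hAB : A ⊆ B) : IsReflRel B :=
  fun a => hAB (hA a)

lemma IsReflRel.inter (hA : IsReflRel A) (hB : IsReflRel B) : IsReflRel (A ∩ B) :=
  fun a => ⟨hA a, hB a⟩

lemma IsReflRel.incR (hA : IsReflRel A) : IsReflRel (IncR A) :=
  fun a => ⟨hA a, le_rfl⟩

lemma IsReflRel.decR (hA : IsReflRel A) : IsReflRel (DecR A) :=
  fun a => ⟨hA a, le_rfl⟩

lemma IsTransRel.inter (hA : IsTransRel A) (hB : IsTransRel B) : IsTransRel (A ∩ B) :=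
  fun u v w huv hvw => ⟨hA u v w huv.1 hvw.1, hB u v w huv.2 hvw.2⟩

lemma subset_tcR : A ⊆ tcR A :=
  fun _ hp => Relation.TransGen.single hp

lemma isTransRel_tcR (A : Set (Fin n × Fin n)) : IsTransRel (tcR A) :=
  fun _ _ _ huv hvw => Relation.TransGen.trans huv hvw

lemma tcR_subset (hAB : A ⊆ B) (hB : IsTransRel B) : tcR A ⊆ B := by
  rintro ⟨a, b⟩ (hab : Relation.TransGen _ a b)
  induction hab with
  | single h => exact hAB h
  | tail _ h ih => exact hB _ _ _ ih (hAB h)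

lemma incR_subset (A : Set (Fin n × Fin n)) : IncR A ⊆ {p | p.1 ≤ p.2} :=
  fun _ hp => hp.2

lemma decR_subset (A : Set (Fin n × Fin n)) : DecR A ⊆ {p | p.2 ≤ p.1} :=
  fun _ hp => hp.2

lemma tcR_subset_le (hA : A ⊆ {p | p.1 ≤ p.2}) : tcR A ⊆ {p | p.1 ≤ p.2} :=
  tcR_subset hA fun u v w (huv : u ≤ v) (hvw : v ≤ w) => (le_trans huv hvw : u ≤ w)

lemma tcR_subset_ge (hA : A ⊆ {p | p.2 ≤ p.1}) : tcR A ⊆ {p | p.2 ≤ p.1} :=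
  tcR_subset hA fun u v w (huv : v ≤ u) (hvw : w ≤ v) => (le_trans hvw huv : w ≤ u)

lemma incR_union (hA : A ⊆ {p | p.1 ≤ p.2}) (hB : B ⊆ {p | p.2 ≤ p.1}) 
    (hAr : IsReflRel A) : IncR (A ∪ B) = A := by
  ext ⟨a, b⟩
  refine ⟨fun ⟨hab, hle⟩ => hab.elim id fun hab => ?_, fun hab => ⟨Or.inl hab, hA hab⟩⟩
  obtain rfl : a = b := le_antisymm hle (hB hab)
  exact hAr a

lemma decR_union (hA : A ⊆ {p | p.1 ≤ p.2}) (hB : B ⊆ {p | p.2 ≤ p.1}) 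
    (hBr : IsReflRel B) : DecR (A ∪ B) = B := by
  ext ⟨a, b⟩
  refine ⟨fun ⟨hab, hle⟩ => hab.elim (fun hab => ?_) id, fun hab => ⟨Or.inr hab, hB hab⟩⟩
  obtain rfl : a = b := le_antisymm (hA hab) hle
  exact hBr a

variable {R S : Set (Fin n × Fin n)}

lemma incR_meetST (hR : IsReflRel R) : IncR (meetST R S) = tcR (IncR R ∪ IncR S) :=
  incR_union (tcR_subset_le (Set.union_subset (incR_subset R) (incR_subset S)))
    (Set.inter_subset_left.trans (decR_subset R))
    (hR.incR.mono_s4 (Set.subset_union_left.trans subset_tcR))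

lemma decR_meetST (hR : IsReflRel R) (hS : IsReflRel S) :
    DecR (meetST R S) = DecR R ∩ DecR S :=
  decR_union (tcR_subset_le (Set.union_subset (incR_subset R) (incR_subset S)))
    (Set.inter_subset_left.trans (decR_subset R)) (hR.decR.inter hS.decR)

lemma incR_joinST (hR : IsReflRel R) (hS : IsReflRel S) :
    IncR (joinST R S) = IncR R ∩ IncR S :=
  incR_union (Set.inter_subset_left.trans (incR_subset R))
    (tcR_subset_ge (Set.union_subset (decR_subset R) (decR_subset S))) (hR.incR.inter hS.incR)

lemma decR_joinST (hR : IsReflRel R) : DecR (joinST R S) = tcR (DecR R ∪ DecR S) :=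
  decR_union (Set.inter_subset_left.trans (incR_subset R))
    (tcR_subset_ge (Set.union_subset (decR_subset R) (decR_subset S)))
    (hR.decR.mono_s4 (Set.subset_union_left.trans subset_tcR))

end

/-- The weak order on semitransitive reflexive relations is a lattice with the
stated meet and join. -/
theorem weakOrder_semitransitive_lattice (n : ℕ) (R S : Set (Fin n × Fin n))
    (hR : IsReflRel R) (hsR : IsSemiTransRel R)
    (hS : IsReflRel S) (hsS : IsSemiTransRel S) :
    (IsReflRel (meetST R S) ∧ IsSemiTransRel (meetST R S) ∧
      WOLE (meetST R S) R ∧ WOLE (meetST R S) S ∧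
      (∀ T : Set (Fin n × Fin n), IsReflRel T → IsSemiTransRel T →
        WOLE T R → WOLE T S → WOLE T (meetST R S))) ∧
    (IsReflRel (joinST R S) ∧ IsSemiTransRel (joinST R S) ∧
      WOLE R (joinST R S) ∧ WOLE S (joinST R S) ∧
      (∀ T : Set (Fin n × Fin n), IsReflRel T → IsSemiTransRel T →
        WOLE R T → WOLE S T → WOLE (joinST R S) T)) := by
  have hMi := incR_meetST (S := S) hR
  have hMd := decR_meetST hR hS
  have hJi := incR_joinST hR hS
  have hJd := decR_joinST (S := S) hR
  refine ⟨⟨(hR.incR.mono_s4 (Set.subset_union_left.trans subset_tcR)).mono_s4 Set.subset_union_left,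
    ?_, ?_, ?_, fun T _ hsT hTR hTS => ?_⟩, ⟨(hR.incR.inter hS.incR).mono_s4 Set.subset_union_left,
    ?_, ?_, ?_, fun T _ hsT hRT hST => ?_⟩⟩ <;>
    simp only [IsSemiTransRel, WOLE, hMi, hMd, hJi, hJd]
  · exact ⟨isTransRel_tcR _, hsR.2.inter hsS.2⟩
  · exact ⟨Set.subset_union_left.trans subset_tcR, Set.inter_subset_left⟩
  · exact ⟨Set.subset_union_right.trans subset_tcR, Set.inter_subset_right⟩
  · exact ⟨tcR_subset (Set.union_subset hTR.1 hTS.1) hsT.1, Set.subset_inter hTR.2 hTS.2⟩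
  · exact ⟨hsR.1.inter hsS.1, isTransRel_tcR _⟩
  · exact ⟨Set.inter_subset_left, Set.subset_union_left.trans subset_tcR⟩
  · exact ⟨Set.inter_subset_right, Set.subset_union_right.trans subset_tcR⟩
  · exact ⟨Set.subset_inter hRT.1 hST.1, tcR_subset (Set.union_subset hRT.2 hST.2) hsT.2⟩
end

section
/- If R is a semitransitive reflexive relation on [n], then its transitive decreasing deletion tdd(R) is a transitive relation. -/
/-- The transitive decreasing deletion. -/
def tddR {n : ℕ} (R : Set (Fin n × Fin n)) : Set (Fin n × Fin n) :=
  R \ {p | p.2 ≤ p.1 ∧ ∃ i j : Fin n, i ≤ p.1 ∧ p.2 ≤ j ∧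
    (i, p.1) ∈ R ∧ (p.1, p.2) ∈ R ∧ (p.2, j) ∈ R ∧ (i, j) ∉ R}

namespace TransitiveDecreasingDeletion

variable {n : ℕ} {R : Set (Fin n × Fin n)} {u v w : Fin n}

def PredSuccClosed (R : Set (Fin n × Fin n)) (u w : Fin n) : Prop :=
  ∀ i j : Fin n, i ≤ u → w ≤ j → (i, u) ∈ R → (w, j) ∈ R → (i, j) ∈ R

theorem mem_of_predSuccClosed (hR : IsReflRel R) (h : PredSuccClosed R u w) : (u, w) ∈ R :=
  h u w le_rfl le_rfl (hR u) (hR w)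

theorem predSuccClosed_of_mem_incR (hInc : IsTransRel (IncR R)) (h : (u, w) ∈ IncR R) :
    PredSuccClosed R u w := by
  intro i j hiu hwj hiu_R hwj_R
  have hiw : (i, w) ∈ IncR R := hInc i u w ⟨hiu_R, hiu⟩ h
  exact (hInc i w j hiw ⟨hwj_R, hwj⟩).1

theorem mem_tddR_iff (hR : IsReflRel R) (hInc : IsTransRel (IncR R)) :
    (u, w) ∈ tddR R ↔ PredSuccClosed R u w := by
  constructor
  · rintro ⟨huw, hkept⟩
    rcases le_total u w with hle | hle
    · exact predSuccClosed_of_mem_incR hInc ⟨huw, hle⟩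
    · intro i j hiu hwj hiu_R hwj_R
      by_contra hij
      exact hkept ⟨hle, i, j, hiu, hwj, hiu_R, huw, hwj_R, hij⟩
  · intro h
    refine ⟨mem_of_predSuccClosed hR h, ?_⟩
    rintro ⟨-, i, j, hiu, hwj, hiu_R, -, hwj_R, hij⟩
    exact hij (h i j hiu hwj hiu_R hwj_R)

theorem PredSuccClosed.trans (hR : IsReflRel R) (hDec : IsTransRel (DecR R))
    (huv : PredSuccClosed R u v) (hvw : PredSuccClosed R v w) : PredSuccClosed R u w := by
  intro i j hiu hwj hiu_R hwj_R
  have hiv : (i, v) ∈ R := huv i v hiu le_rfl hiu_R (hR v)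
  have hvj : (v, j) ∈ R := hvw v j le_rfl hwj (hR v) hwj_R
  rcases le_or_gt v j with hvj_le | hjv
  · exact huv i j hiu hvj_le hiu_R hvj
  rcases le_or_gt i v with hiv_le | hvi
  · exact hvw i j hiv_le hwj hiv hwj_R
  · exact (hDec i v j ⟨hiv, hvi.le⟩ ⟨hvj, hjv.le⟩).1

end TransitiveDecreasingDeletion

open TransitiveDecreasingDeletion in
/-- The transitive decreasing deletion of a semitransitive reflexive relation is
transitive. -/
theorem tdd_transitive (n : ℕ) (R : Set (Fin n × Fin n))
    (hR : IsReflRel R) (hs : IsSemiTransRel R) :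
    IsTransRel (tddR R) := by
  obtain ⟨hInc, hDec⟩ := hs
  intro u v w huv hvw
  rw [mem_tddR_iff hR hInc] at huv hvw ⊢
  exact huv.trans hR hDec hvw
end

section
/- If R and S are partial orders on [n] (reflexive, transitive, antisymmetric relations), then tdd(tc(Inc(R) ∪ Inc(S)) ∪ (Dec(R) ∩ Dec(S))) is antisymmetric. Consequently, the set of all partial orders on [n] forms a lattice under the weak order. -/
/-- The transitive increasing deletion. -/
def tidR {n : ℕ} (R : Set (Fin n × Fin n)) : Set (Fin n × Fin n) :=
  R \ {p | p.1 ≤ p.2 ∧ ∃ i j : Fin n, p.1 ≤ i ∧ j ≤ p.2 ∧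
    (i, p.1) ∈ R ∧ (p.1, p.2) ∈ R ∧ (p.2, j) ∈ R ∧ (i, j) ∉ R}

/-- Meet in the weak order on transitive relations. -/
def meetT {n : ℕ} (R S : Set (Fin n × Fin n)) : Set (Fin n × Fin n) :=
  tddR (tcR (IncR R ∪ IncR S) ∪ (DecR R ∩ DecR S))

/-- Join in the weak order on transitive relations. -/
def joinT {n : ℕ} (R S : Set (Fin n × Fin n)) : Set (Fin n × Fin n) :=
  tidR ((IncR R ∩ IncR S) ∪ tcR (DecR R ∪ DecR S))

/-- A poset on [n] is a reflexive transitive antisymmetric relation. -/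
def IsPosetRel {n : ℕ} (R : Set (Fin n × Fin n)) : Prop :=
  IsReflRel R ∧ IsTransRel R ∧ IsAntisymRel R

namespace PosetWeakOrder

open Relation

variable {n : ℕ}

section Tdd

variable {K : Set (Fin n × Fin n)}

def Survives (K : Set (Fin n × Fin n)) (u v : Fin n) : Prop :=
  ∀ i j, i ≤ u → v ≤ j → (i, u) ∈ K → (v, j) ∈ K → (i, j) ∈ K

lemma survives_of_mem_incR (hInc : IsTransRel (IncR K)) {u v : Fin n} (h : (u, v) ∈ IncR K) :
    Survives K u v := fun i j hiu hvj hi hj =>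
  (hInc i v j (hInc i u v ⟨hi, hiu⟩ h) ⟨hj, hvj⟩).1

lemma mem_tddR_of_survives {u v : Fin n} (h : (u, v) ∈ K) (hs : Survives K u v) :
    (u, v) ∈ tddR K :=
  ⟨h, fun ⟨_, i, j, hiu, hvj, hi, _, hj, hij⟩ => hij (hs i j hiu hvj hi hj)⟩

lemma survives_of_mem_tddR (hInc : IsTransRel (IncR K)) {u v : Fin n} (h : (u, v) ∈ tddR K) :
    Survives K u v := by
  obtain ⟨hK, hdel⟩ := h
  rcases le_total u v with huv | hvu
  · exact survives_of_mem_incR hInc ⟨hK, huv⟩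
  · intro i j hiu hvj hi hj
    by_contra hij
    exact hdel ⟨hvu, i, j, hiu, hvj, hi, hK, hj, hij⟩

lemma incR_subset_tddR (hInc : IsTransRel (IncR K)) : IncR K ⊆ tddR K :=
  fun _ h => mem_tddR_of_survives h.1 (survives_of_mem_incR hInc h)

lemma isReflRel_tddR (hK : IsReflRel K) (hInc : IsTransRel (IncR K)) : IsReflRel (tddR K) :=
  fun a => incR_subset_tddR hInc ⟨hK a, le_rfl⟩

lemma mem_of_mem_of_mem (hDec : IsTransRel (DecR K)) {a q b : Fin n}
    (haq : (a, q) ∈ K) (hqb : (q, b) ∈ K)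
    (hright : q ≤ b → (a, b) ∈ K) (hleft : a ≤ q → (a, b) ∈ K) : (a, b) ∈ K := by
  rcases le_total q b with hq | hq
  · exact hright hq
  rcases le_total a q with ha | ha
  · exact hleft ha
  · exact (hDec a q b ⟨haq, ha⟩ ⟨hqb, hq⟩).1

lemma isTransRel_tddR (hK : IsReflRel K) (hInc : IsTransRel (IncR K))
    (hDec : IsTransRel (DecR K)) : IsTransRel (tddR K) := by
  intro p q r hpq hqr
  have sp := survives_of_mem_tddR hInc hpq
  have sq := survives_of_mem_tddR hInc hqr
  have hs : Survives K p r := by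
    intro i j hip hrj hi hj
    have hiq : (i, q) ∈ K := sp i q hip le_rfl hi (hK q)
    have hqj : (q, j) ∈ K := sq q j le_rfl hrj (hK q) hj
    exact mem_of_mem_of_mem hDec hiq hqj (fun h => sp i j hip h hi hqj)
      (fun h => sq i j h hrj hiq hj)
  exact mem_tddR_of_survives (hs p r le_rfl le_rfl (hK p) (hK r)) hs

end Tdd

lemma isTransRel_decR {R : Set (Fin n × Fin n)} (hR : IsTransRel R) : IsTransRel (DecR R) :=
  fun _ _ _ h₁ h₂ => ⟨hR _ _ _ h₁.1 h₂.1, h₂.2.trans h₁.2⟩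

lemma isTransRel_inter {R S : Set (Fin n × Fin n)} (hR : IsTransRel R) (hS : IsTransRel S) :
    IsTransRel (R ∩ S) :=
  fun _ _ _ h₁ h₂ => ⟨hR _ _ _ h₁.1 h₂.1, hS _ _ _ h₁.2 h₂.2⟩

lemma isTransRel_tcR (A : Set (Fin n × Fin n)) : IsTransRel (tcR A) :=
  fun _ _ _ => TransGen.trans

lemma tcR_subset {A T : Set (Fin n × Fin n)} (hT : IsTransRel T) (hA : A ⊆ T) : tcR A ⊆ T := by
  rintro ⟨u, v⟩ (h : TransGen _ u v)
  induction h with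
  | single h => exact hA h
  | tail _ h ih => exact hT _ _ _ ih (hA h)

section Meet

variable {R S : Set (Fin n × Fin n)}

def IncStep (R S : Set (Fin n × Fin n)) (u v : Fin n) : Prop := (u, v) ∈ IncR R ∪ IncR S

def meetBase (R S : Set (Fin n × Fin n)) : Set (Fin n × Fin n) :=
  tcR (IncR R ∪ IncR S) ∪ (DecR R ∩ DecR S)

lemma IncStep.le {u v : Fin n} (h : IncStep R S u v) : u ≤ v := by
  rcases h with h | h <;> exact h.2

lemma le_of_reflTransGen_incStep {u v : Fin n} (h : ReflTransGen (IncStep R S) u v) : u ≤ v := by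
  induction h with
  | refl => exact le_rfl
  | tail _ h ih => exact ih.trans h.le

lemma mem_tcR_incR_iff {u v : Fin n} :
    (u, v) ∈ tcR (IncR R ∪ IncR S) ↔ TransGen (IncStep R S) u v := Iff.rfl

lemma incR_meetBase (hR : IsReflRel R) : IncR (meetBase R S) = tcR (IncR R ∪ IncR S) := by
  ext ⟨u, v⟩
  constructor
  · rintro ⟨h | h, huv⟩
    · exact h
    · obtain rfl : u = v := le_antisymm huv h.1.2
      exact TransGen.single (Or.inl ⟨hR u, le_rfl⟩)
  · intro h
    exact ⟨Or.inl h, le_of_reflTransGen_incStep (mem_tcR_incR_iff.1 h).to_reflTransGen⟩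

lemma decR_meetBase (hR : IsReflRel R) (hS : IsReflRel S) :
    DecR (meetBase R S) = DecR R ∩ DecR S := by
  ext ⟨u, v⟩
  constructor
  · rintro ⟨h | h, hvu⟩
    · obtain rfl : u = v :=
        le_antisymm (le_of_reflTransGen_incStep (mem_tcR_incR_iff.1 h).to_reflTransGen) hvu
      exact ⟨⟨hR u, le_rfl⟩, ⟨hS u, le_rfl⟩⟩
    · exact h
  · intro h
    exact ⟨Or.inr h, h.1.2⟩

lemma isReflRel_meetBase (hR : IsReflRel R) : IsReflRel (meetBase R S) :=
  fun a => Or.inl (TransGen.single (Or.inl ⟨hR a, le_rfl⟩))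

lemma mem_meetBase_of_reflTransGen (hR : IsReflRel R) {u v : Fin n}
    (h : ReflTransGen (IncStep R S) u v) : (u, v) ∈ meetBase R S := by
  rcases h.cases_head with rfl | ⟨w, huw, hwv⟩
  · exact isReflRel_meetBase hR u
  · exact Or.inl (TransGen.head' huw hwv)

lemma reflTransGen_of_mem_meetBase (hR : IsReflRel R) {u v : Fin n} (huv : u ≤ v)
    (h : (u, v) ∈ meetBase R S) : ReflTransGen (IncStep R S) u v := by
  have h' : (u, v) ∈ IncR (meetBase R S) := ⟨h, huv⟩
  rw [incR_meetBase hR] at h'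
  exact (mem_tcR_incR_iff.1 h').to_reflTransGen

lemma isTransRel_incR_meetBase (hR : IsReflRel R) : IsTransRel (IncR (meetBase R S)) := by
  rw [incR_meetBase hR]
  exact isTransRel_tcR _

lemma isTransRel_decR_meetBase (hR : IsPosetRel R) (hS : IsPosetRel S) :
    IsTransRel (DecR (meetBase R S)) := by
  rw [decR_meetBase hR.1 hS.1]
  exact isTransRel_inter (isTransRel_decR hR.2.1) (isTransRel_decR hS.2.1)

lemma meetT_comm (R S : Set (Fin n × Fin n)) : meetT R S = meetT S R := by
  simp only [meetT, Set.union_comm, Set.inter_comm]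

lemma eq_of_incStep_of_mem_decR (hR : IsAntisymRel R) (hS : IsAntisymRel S) {u v : Fin n}
    (h : IncStep R S u v) (hvu : (v, u) ∈ DecR R ∩ DecR S) : u = v := by
  rcases h with h | h
  · exact hR u v h.1 hvu.1.1
  · exact hS u v h.1 hvu.2.1

lemma eq_of_reflTransGen_of_survives (hR : IsPosetRel R) (hS : IsPosetRel S) {u v c : Fin n}
    (hs : Survives (meetBase R S) u v) (hvc : ReflTransGen (IncStep R S) v c)
    (hcu : ReflTransGen (IncStep R S) c u) : c = v := by
  induction hvc with
  | refl => rfl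
  | @tail b c _ hbc ih =>
    obtain rfl := ih (hcu.head hbc)
    have hcb : (c, b) ∈ meetBase R S :=
      hs c b (le_of_reflTransGen_incStep hcu) le_rfl (mem_meetBase_of_reflTransGen hR.1 hcu)
        (isReflRel_meetBase hR.1 b)
    have hDec : (c, b) ∈ DecR R ∩ DecR S := by
      rw [← decR_meetBase hR.1 hS.1]
      exact ⟨hcb, hbc.le⟩
    exact (eq_of_incStep_of_mem_decR hR.2.2 hS.2.2 hbc hDec).symm

lemma isAntisymRel_meetT (hR : IsPosetRel R) (hS : IsPosetRel S) : IsAntisymRel (meetT R S) := by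
  have key : ∀ u v, (u, v) ∈ meetT R S → (v, u) ∈ meetT R S → v ≤ u → u = v := by
    intro u v huv hvu hle
    exact eq_of_reflTransGen_of_survives hR hS
      (survives_of_mem_tddR (isTransRel_incR_meetBase hR.1) huv)
      (reflTransGen_of_mem_meetBase hR.1 hle hvu.1) ReflTransGen.refl
  intro u v huv hvu
  rcases le_total v u with h | h
  · exact key u v huv hvu h
  · exact (key v u hvu huv h).symm

lemma isPosetRel_meetT (hR : IsPosetRel R) (hS : IsPosetRel S) : IsPosetRel (meetT R S) :=
  ⟨isReflRel_tddR (isReflRel_meetBase hR.1) (isTransRel_incR_meetBase hR.1),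
    isTransRel_tddR (isReflRel_meetBase hR.1) (isTransRel_incR_meetBase hR.1)
      (isTransRel_decR_meetBase hR hS),
    isAntisymRel_meetT hR hS⟩

lemma tcR_incR_subset_meetT (hR : IsReflRel R) : tcR (IncR R ∪ IncR S) ⊆ meetT R S := by
  rw [← incR_meetBase hR]
  exact incR_subset_tddR (isTransRel_incR_meetBase hR)

lemma decR_meetT_subset (hR : IsReflRel R) (hS : IsReflRel S) :
    DecR (meetT R S) ⊆ DecR R ∩ DecR S := by
  rw [← decR_meetBase hR hS]
  exact fun _ hp => ⟨hp.1.1, hp.2⟩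

lemma wole_meetT_left (hR : IsReflRel R) (hS : IsReflRel S) : WOLE (meetT R S) R :=
  ⟨fun _ hp => ⟨tcR_incR_subset_meetT hR (TransGen.single (Or.inl hp)), hp.2⟩,
    fun _ hp => (decR_meetT_subset hR hS hp).1⟩

lemma wole_meetT_right (hR : IsReflRel R) (hS : IsReflRel S) : WOLE (meetT R S) S := by
  rw [meetT_comm]
  exact wole_meetT_left hS hR

section LowerBound

variable {T : Set (Fin n × Fin n)}

lemma decR_comp_incR (hR : IsTransRel R) (hT : IsTransRel T) (hTR : WOLE T R) {b c j : Fin n}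
    (hbc : (b, c) ∈ DecR T) (hcj : (c, j) ∈ IncR R) : (b, j) ∈ DecR T ∨ (b, j) ∈ IncR R := by
  have hbjR : (b, j) ∈ R := hR _ _ _ (hTR.2 hbc).1 hcj.1
  have hbjT : (b, j) ∈ T := hT _ _ _ hbc.1 (hTR.1 hcj).1
  rcases le_total j b with h | h
  exacts [Or.inl ⟨hbjT, h⟩, Or.inr ⟨hbjR, h⟩]

lemma incR_comp_decR (hR : IsTransRel R) (hT : IsTransRel T) (hTR : WOLE T R) {i b j : Fin n}
    (hib : (i, b) ∈ IncR R) (hbj : (b, j) ∈ DecR T) : (i, j) ∈ DecR T ∨ (i, j) ∈ IncR R := by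
  have hijR : (i, j) ∈ R := hR _ _ _ hib.1 (hTR.2 hbj).1
  have hijT : (i, j) ∈ T := hT _ _ _ (hTR.1 hib).1 hbj.1
  rcases le_total j i with h | h
  exacts [Or.inl ⟨hijT, h⟩, Or.inr ⟨hijR, h⟩]

variable (hR : IsTransRel R) (hS : IsTransRel S) (hT : IsTransRel T)
  (hTR : WOLE T R) (hTS : WOLE T S)
include hR hS hT hTR hTS

lemma decR_comp_incStep {b c j : Fin n} (hbc : (b, c) ∈ DecR T) (hcj : IncStep R S c j) :
    (b, j) ∈ DecR T ∨ IncStep R S b j := by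
  rcases hcj with h | h
  · exact (decR_comp_incR hR hT hTR hbc h).imp_right Or.inl
  · exact (decR_comp_incR hS hT hTS hbc h).imp_right Or.inr

lemma incStep_comp_decR {i b j : Fin n} (hib : IncStep R S i b) (hbj : (b, j) ∈ DecR T) :
    (i, j) ∈ DecR T ∨ IncStep R S i j := by
  rcases hib with h | h
  · exact (incR_comp_decR hR hT hTR h hbj).imp_right Or.inl
  · exact (incR_comp_decR hS hT hTS h hbj).imp_right Or.inr

lemma decR_comp_reflTransGen {b a j : Fin n} (hba : (b, a) ∈ DecR T)
    (haj : ReflTransGen (IncStep R S) a j) : (b, j) ∈ DecR T ∨ TransGen (IncStep R S) b j := by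
  induction haj with
  | refl => exact Or.inl hba
  | tail _ hcj ih =>
    rcases ih with ih | ih
    · exact (decR_comp_incStep hR hS hT hTR hTS ih hcj).imp_right TransGen.single
    · exact Or.inr (ih.tail hcj)

lemma reflTransGen_comp_decR {i b j : Fin n} (hib : ReflTransGen (IncStep R S) i b)
    (hbj : (b, j) ∈ DecR T) : (i, j) ∈ DecR T ∨ TransGen (IncStep R S) i j := by
  induction hib using ReflTransGen.head_induction_on with
  | refl => exact Or.inl hbj
  | head hic _ ih =>
    rcases ih with ih | ih
    · exact (incStep_comp_decR hR hS hT hTR hTS hic ih).imp_right TransGen.single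
    · exact Or.inr (ih.head hic)

end LowerBound

lemma survives_of_mem_decR {T : Set (Fin n × Fin n)} (hR : IsPosetRel R) (hS : IsPosetRel S)
    (hT : IsTransRel T) (hTR : WOLE T R) (hTS : WOLE T S) {u v : Fin n} (huv : (u, v) ∈ DecR T) :
    Survives (meetBase R S) u v := by
  intro i j hiu hvj hi hj
  have hpath {a b : Fin n} (hab : a ≤ b) (h : (a, b) ∈ meetBase R S) :=
    reflTransGen_of_mem_meetBase hR.1 hab h
  rcases decR_comp_reflTransGen hR.2.1 hS.2.1 hT hTR hTS huv (hpath hvj hj) with huj | huj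
  · rcases reflTransGen_comp_decR hR.2.1 hS.2.1 hT hTR hTS (hpath hiu hi) huj with hij | hij
    · exact Or.inr ⟨hTR.2 hij, hTS.2 hij⟩
    · exact Or.inl hij
  · exact Or.inl (TransGen.trans_right (hpath hiu hi) huj)

lemma wole_meetT_of_wole {T : Set (Fin n × Fin n)} (hR : IsPosetRel R) (hS : IsPosetRel S)
    (hT : IsTransRel T) (hTR : WOLE T R) (hTS : WOLE T S) : WOLE T (meetT R S) := by
  constructor
  · rintro p ⟨hp, hle⟩
    have hp' : p ∈ tcR (IncR R ∪ IncR S) := by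
      rw [← incR_meetBase hR.1]
      exact ⟨hp.1, hle⟩
    exact ⟨tcR_subset hT (Set.union_subset (fun _ hq => (hTR.1 hq).1)
      (fun _ hq => (hTS.1 hq).1)) hp', hle⟩
  · rintro ⟨u, v⟩ huv
    exact ⟨mem_tddR_of_survives (Or.inr ⟨hTR.2 huv, hTS.2 huv⟩)
      (survives_of_mem_decR hR hS hT hTR hTS huv), huv.2⟩

lemma exists_meet (hR : IsPosetRel R) (hS : IsPosetRel S) :
    ∃ M : Set (Fin n × Fin n), IsPosetRel M ∧ WOLE M R ∧ WOLE M S ∧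
      ∀ T : Set (Fin n × Fin n), IsPosetRel T → WOLE T R → WOLE T S → WOLE T M :=
  ⟨meetT R S, isPosetRel_meetT hR hS, wole_meetT_left hR.1 hS.1, wole_meetT_right hR.1 hS.1,
    fun _ hT hTR hTS => wole_meetT_of_wole hR hS hT.2.1 hTR hTS⟩

end Meet

section Transpose

variable {R S : Set (Fin n × Fin n)}

lemma isPosetRel_preimage_swap (hR : IsPosetRel R) : IsPosetRel (Prod.swap ⁻¹' R) :=
  ⟨fun a => hR.1 a, fun u v w h₁ h₂ => hR.2.1 w v u h₂ h₁,
    fun u v h₁ h₂ => (hR.2.2 v u h₁ h₂).symm⟩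

lemma wole_preimage_swap (h : WOLE R S) : WOLE (Prod.swap ⁻¹' S) (Prod.swap ⁻¹' R) :=
  ⟨fun _ hp => ⟨(h.2 ⟨hp.1, hp.2⟩).1, hp.2⟩, fun _ hp => ⟨(h.1 ⟨hp.1, hp.2⟩).1, hp.2⟩⟩

lemma exists_join (hR : IsPosetRel R) (hS : IsPosetRel S) :
    ∃ J : Set (Fin n × Fin n), IsPosetRel J ∧ WOLE R J ∧ WOLE S J ∧
      ∀ T : Set (Fin n × Fin n), IsPosetRel T → WOLE R T → WOLE S T → WOLE J T := by
  obtain ⟨M, hM, hMR, hMS, hglb⟩ :=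
    exists_meet (isPosetRel_preimage_swap hR) (isPosetRel_preimage_swap hS)
  exact ⟨Prod.swap ⁻¹' M, isPosetRel_preimage_swap hM, wole_preimage_swap hMR,
    wole_preimage_swap hMS, fun T hT hRT hST => wole_preimage_swap
      (hglb _ (isPosetRel_preimage_swap hT) (wole_preimage_swap hRT) (wole_preimage_swap hST))⟩

end Transpose

end PosetWeakOrder

/-- The transitive meet of two posets is antisymmetric; consequently the set of
all posets on [n] forms a lattice under the weak order. -/
theorem posets_lattice (n : ℕ) :
    (∀ R S : Set (Fin n × Fin n), IsPosetRel R → IsPosetRel S →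
      IsAntisymRel (meetT R S)) ∧
    (∀ R S : Set (Fin n × Fin n), IsPosetRel R → IsPosetRel S →
      (∃ M : Set (Fin n × Fin n), IsPosetRel M ∧ WOLE M R ∧ WOLE M S ∧
        ∀ T : Set (Fin n × Fin n), IsPosetRel T → WOLE T R → WOLE T S → WOLE T M) ∧
      (∃ J : Set (Fin n × Fin n), IsPosetRel J ∧ WOLE R J ∧ WOLE S J ∧
        ∀ T : Set (Fin n × Fin n), IsPosetRel T → WOLE R T → WOLE S T → WOLE J T)) :=
  ⟨fun _ _ hR hS => PosetWeakOrder.isAntisymRel_meetT hR hS,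
    fun _ _ hR hS => ⟨PosetWeakOrder.exists_meet hR hS, PosetWeakOrder.exists_join hR hS⟩⟩
end

section
/- All cover relations in the weak order on partial orders on [n] are cover relations in the weak order on all reflexive relations; in particular, the weak order on partial orders on [n] is graded by the function R ↦ |Dec(R)| − |Inc(R)|. -/
/-- Cover relations of the weak order restricted to posets. -/
def CoversPos {n : ℕ} (R S : Set (Fin n × Fin n)) : Prop :=
  WOLE R S ∧ R ≠ S ∧
    ∀ T : Set (Fin n × Fin n), IsPosetRel T → WOLE R T → WOLE T S → T = R ∨ T = S

/-!
For `R ≤ S` in the weak order, the interval `[R, S]` consists of all relations between `R ∩ S`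
and `R ∪ S`. If `R ⋖ S` among posets, take a pair `p` of `R \ S` (or of `S \ R`) whose interval
in `R` (resp. `S`) is smallest: it is a cover relation of that poset, so deleting it leaves a
poset in `[R, S]`, which must be the other endpoint. So `R` and `S` differ in a single pair,
strictly increasing if it lies in `R` and strictly decreasing if it lies in `S`; such a pair
spans a cover among all relations and changes the rank by one.
-/

open Set

variable {n : ℕ}

section WeakOrder

variable {R S T : Set (Fin n × Fin n)}

lemma wole_and_wole_iff (hRS : WOLE R S) :
    WOLE R T ∧ WOLE T S ↔ R ∩ S ⊆ T ∧ T ⊆ R ∪ S := by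
  constructor
  · rintro ⟨hRT, hTS⟩
    constructor
    · rintro q ⟨hqR, hqS⟩
      rcases le_total q.1 q.2 with hq | hq
      · exact (hTS.1 ⟨hqS, hq⟩).1
      · exact (hRT.2 ⟨hqR, hq⟩).1
    · intro q hqT
      rcases le_total q.1 q.2 with hq | hq
      · exact Or.inl (hRT.1 ⟨hqT, hq⟩).1
      · exact Or.inr (hTS.2 ⟨hqT, hq⟩).1
  · rintro ⟨hlow, hup⟩
    refine ⟨⟨fun q hq => ?_, fun q hq => ⟨hlow ⟨hq.1, (hRS.2 hq).1⟩, hq.2⟩⟩,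
      ⟨fun q hq => ⟨hlow ⟨(hRS.1 hq).1, hq.1⟩, hq.2⟩, fun q hq => ?_⟩⟩
    · rcases hup hq.1 with hqR | hqS
      · exact ⟨hqR, hq.2⟩
      · exact hRS.1 ⟨hqS, hq.2⟩
    · rcases hup hq.1 with hqR | hqS
      · exact hRS.2 ⟨hqR, hq.2⟩
      · exact ⟨hqS, hq.2⟩

lemma WOLE.fst_lt_snd_of_mem_diff {p : Fin n × Fin n} (hRS : WOLE R S) (hp : p ∈ R \ S) :
    p.1 < p.2 :=
  lt_of_not_ge fun h => hp.2 (hRS.2 ⟨hp.1, h⟩).1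

lemma WOLE.snd_lt_fst_of_mem_diff {p : Fin n × Fin n} (hRS : WOLE R S) (hp : p ∈ S \ R) :
    p.2 < p.1 :=
  lt_of_not_ge fun h => hp.2 (hRS.1 ⟨hp.1, h⟩).1

end WeakOrder

section Poset

variable {P Q : Set (Fin n × Fin n)} {a b c : Fin n}

def relIcc (P : Set (Fin n × Fin n)) (a b : Fin n) : Set (Fin n) := {c | (a, c) ∈ P ∧ (c, b) ∈ P}

lemma ncard_relIcc_lt_left (hP : IsPosetRel P) (hac : (a, c) ∈ P) (hcb : (c, b) ∈ P)
    (hne : c ≠ b) : (relIcc P a c).ncard < (relIcc P a b).ncard := by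
  refine ncard_lt_ncard ((ssubset_iff_of_subset ?_).2 ⟨b, ⟨hP.2.1 a c b hac hcb, hP.1 b⟩, ?_⟩)
  · exact fun d hd => ⟨hd.1, hP.2.1 d c b hd.2 hcb⟩
  · exact fun hb => hne (hP.2.2 c b hcb hb.2)

lemma ncard_relIcc_lt_right (hP : IsPosetRel P) (hac : (a, c) ∈ P) (hcb : (c, b) ∈ P)
    (hne : c ≠ a) : (relIcc P c b).ncard < (relIcc P a b).ncard := by
  refine ncard_lt_ncard ((ssubset_iff_of_subset ?_).2 ⟨a, ⟨hP.1 a, hP.2.1 a c b hac hcb⟩, ?_⟩)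
  · exact fun d hd => ⟨hP.2.1 a c d hac hd.1, hd.2⟩
  · exact fun ha => hne (hP.2.2 c a ha.1 hac)

lemma isPosetRel_diff_singleton (hP : IsPosetRel P) (hab : a ≠ b)
    (hcov : ∀ c, (a, c) ∈ P → (c, b) ∈ P → c = a ∨ c = b) : IsPosetRel (P \ {(a, b)}) := by
  refine ⟨fun x => ⟨hP.1 x, fun hx => hab ?_⟩, ?_, fun u v huv hvu => hP.2.2 u v huv.1 hvu.1⟩
  · simp only [mem_singleton_iff, Prod.mk.injEq] at hx
    exact hx.1.symm.trans hx.2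
  · rintro u v w ⟨huv, huv'⟩ ⟨hvw, hvw'⟩
    refine ⟨hP.2.1 u v w huv hvw, ?_⟩
    rintro ⟨⟩
    rcases hcov v huv hvw with rfl | rfl
    · exact hvw' rfl
    · exact huv' rfl

/-- A pair of `P \ Q` whose `P`-interval is smallest is a cover relation of `P`: a point strictly
inside the interval would split it into two pairs of `P`, one of which escapes the transitive
relation `Q` and has a smaller interval. -/
lemma exists_isPosetRel_diff_singleton (hP : IsPosetRel P) (hQr : IsReflRel Q)
    (hQt : IsTransRel Q) (hne : (P \ Q).Nonempty) : ∃ p ∈ P \ Q, IsPosetRel (P \ {p}) := by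
  obtain ⟨⟨a, b⟩, hab, hmin⟩ :=
    exists_min_image (P \ Q) (fun p => (relIcc P p.1 p.2).ncard) (toFinite _) hne
  refine ⟨(a, b), hab, isPosetRel_diff_singleton hP ?_ fun c hac hcb => ?_⟩
  · rintro rfl
    exact hab.2 (hQr a)
  by_contra! hc
  by_cases hacQ : (a, c) ∈ Q
  · have hcbQ : (c, b) ∉ Q := fun h => hab.2 (hQt a c b hacQ h)
    exact (hmin (c, b) ⟨hcb, hcbQ⟩).not_gt (ncard_relIcc_lt_right hP hac hcb hc.1)
  · exact (hmin (a, c) ⟨hac, hacQ⟩).not_gt (ncard_relIcc_lt_left hP hac hcb hc.2)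

end Poset

section Covers

variable {R S : Set (Fin n × Fin n)}

lemma CoversPos.exists_insert (hR : IsPosetRel R) (hS : IsPosetRel S) (h : CoversPos R S) :
    (∃ p ∉ S, p.1 < p.2 ∧ R = insert p S) ∨ (∃ p ∉ R, p.2 < p.1 ∧ S = insert p R) := by
  obtain ⟨hRS, hne, hcov⟩ := h
  have hbetween (T : Set (Fin n × Fin n)) (hT : IsPosetRel T) (hlow : R ∩ S ⊆ T)
      (hup : T ⊆ R ∪ S) : T = R ∨ T = S :=
    have hRTS := (wole_and_wole_iff hRS).2 ⟨hlow, hup⟩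
    hcov T hT hRTS.1 hRTS.2
  by_cases hsub : R ⊆ S
  · obtain ⟨p, hp, hT⟩ := exists_isPosetRel_diff_singleton hS hR.1 hR.2.1
      (sdiff_nonempty.2 fun h => hne (hsub.antisymm h))
    have hlow : R ∩ S ⊆ S \ {p} := fun q hq => ⟨hq.2, by rintro rfl; exact hp.2 hq.1⟩
    have hSp : S \ {p} = R :=
      (hbetween _ hT hlow (sdiff_subset.trans subset_union_right)).resolve_right
        (sdiff_singleton_ssubset.2 hp.1).ne
    refine Or.inr ⟨p, hp.2, hRS.snd_lt_fst_of_mem_diff hp, ?_⟩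
    rw [← hSp, insert_sdiff_self_of_mem hp.1]
  · obtain ⟨p, hp, hT⟩ := exists_isPosetRel_diff_singleton hR hS.1 hS.2.1 (sdiff_nonempty.2 hsub)
    have hlow : R ∩ S ⊆ R \ {p} := fun q hq => ⟨hq.1, by rintro rfl; exact hp.2 hq.2⟩
    have hRp : R \ {p} = S :=
      (hbetween _ hT hlow (sdiff_subset.trans subset_union_left)).resolve_left
        (sdiff_singleton_ssubset.2 hp.1).ne
    refine Or.inl ⟨p, hp.2, hRS.fst_lt_snd_of_mem_diff hp, ?_⟩
    rw [← hRp, insert_sdiff_self_of_mem hp.1]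

end Covers

section Insert

variable {A : Set (Fin n × Fin n)} {p : Fin n × Fin n}

lemma incR_insert_of_le (h : p.1 ≤ p.2) : IncR (insert p A) = insert p (IncR A) := by
  ext q
  simp only [IncR, mem_ofPred_eq, mem_insert_iff]
  grind

lemma incR_insert_of_lt (h : p.2 < p.1) : IncR (insert p A) = IncR A := by
  ext q
  simp only [IncR, mem_ofPred_eq, mem_insert_iff]
  grind

lemma decR_insert_of_le (h : p.2 ≤ p.1) : DecR (insert p A) = insert p (DecR A) := by
  ext q
  simp only [DecR, mem_ofPred_eq, mem_insert_iff]
  grind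

lemma decR_insert_of_lt (h : p.1 < p.2) : DecR (insert p A) = DecR A := by
  ext q
  simp only [DecR, mem_ofPred_eq, mem_insert_iff]
  grind

lemma rankR_insert_of_lt (hp : p ∉ A) (h : p.1 < p.2) : rankR (insert p A) = rankR A - 1 := by
  rw [rankR, rankR, incR_insert_of_le h.le, decR_insert_of_lt h,
    ncard_insert_of_notMem fun hp' => hp hp'.1]
  push_cast
  ring

lemma rankR_insert_of_gt (hp : p ∉ A) (h : p.2 < p.1) : rankR (insert p A) = rankR A + 1 := by
  rw [rankR, rankR, decR_insert_of_le h.le, incR_insert_of_lt h,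
    ncard_insert_of_notMem fun hp' => hp hp'.1]
  push_cast
  ring

lemma coversRefl_insert_left (hp : p ∉ A) (h : WOLE (insert p A) A) :
    CoversRefl (insert p A) A := by
  refine ⟨h, (ssubset_insert hp).ne', fun T _ hRT hTS => ?_⟩
  obtain ⟨hlow, hup⟩ := (wole_and_wole_iff h).1 ⟨hRT, hTS⟩
  rw [inter_eq_right.2 (subset_insert p A)] at hlow
  rw [union_eq_left.2 (subset_insert p A)] at hup
  exact ((wcovBy_insert p A).eq_or_eq hlow hup).symm

lemma coversRefl_insert_right (hp : p ∉ A) (h : WOLE A (insert p A)) :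
    CoversRefl A (insert p A) := by
  refine ⟨h, (ssubset_insert hp).ne, fun T _ hRT hTS => ?_⟩
  obtain ⟨hlow, hup⟩ := (wole_and_wole_iff h).1 ⟨hRT, hTS⟩
  rw [inter_eq_left.2 (subset_insert p A)] at hlow
  rw [union_eq_right.2 (subset_insert p A)] at hup
  exact (wcovBy_insert p A).eq_or_eq hlow hup

end Insert

/-- All cover relations in the weak order on posets are cover relations in the
weak order on all reflexive relations; in particular the weak order on posets is
graded by R ↦ |Dec R| - |Inc R|. -/
theorem covers_posets_are_covers_relations (n : ℕ) (R S : Set (Fin n × Fin n))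
    (hR : IsPosetRel R) (hS : IsPosetRel S) (h : CoversPos R S) :
    CoversRefl R S ∧ rankR S = rankR R + 1 := by
  rcases h.exists_insert hR hS with ⟨p, hp, hlt, rfl⟩ | ⟨p, hp, hgt, rfl⟩
  · exact ⟨coversRefl_insert_left hp h.1, by rw [rankR_insert_of_lt hp hlt]; ring⟩
  · exact ⟨coversRefl_insert_right hp h.1, rankR_insert_of_gt hp hgt⟩
end

section
/- Let σ ≤ σ' be permutations of [n] in the weak order. Then a permutation τ lies in the interval [σ, σ'] of the weak order if and only if the total order ≺_τ is a linear extension of the poset ≺_σ ∩ ≺_σ' = Inc(≺_σ') ∪ Dec(≺_σ). -/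
/-- The total order on [n] associated to a permutation σ: u ≤ v when u appears
before v in σ. -/
def ordP {n : ℕ} (σ : Equiv.Perm (Fin n)) : Set (Fin n × Fin n) :=
  {p | σ.symm p.1 ≤ σ.symm p.2}

/-- Versions of a permutation. -/
def verP {n : ℕ} (σ : Equiv.Perm (Fin n)) : Set (Fin n × Fin n) :=
  {p | p.1 ≤ p.2 ∧ σ.symm p.1 ≤ σ.symm p.2}

/-- Inversions of a permutation. -/
def invP {n : ℕ} (σ : Equiv.Perm (Fin n)) : Set (Fin n × Fin n) :=
  {p | p.2 ≤ p.1 ∧ σ.symm p.1 ≤ σ.symm p.2}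

def IsTotalRel {n : ℕ} (R : Set (Fin n × Fin n)) : Prop :=
  ∀ u v : Fin n, (u, v) ∈ R ∨ (v, u) ∈ R

section Relations

variable {n : ℕ} {R S T : Set (Fin n × Fin n)}

lemma incR_subset_s12 : IncR R ⊆ R := fun _ hp => hp.1

lemma decR_subset_s12 : DecR R ⊆ R := fun _ hp => hp.1

lemma incR_subset_incR_iff : IncR S ⊆ IncR T ↔ IncR S ⊆ T :=
  ⟨fun h => h.trans incR_subset_s12, fun h _ hp => ⟨h hp, hp.2⟩⟩

lemma decR_subset_decR_iff : DecR S ⊆ DecR T ↔ DecR S ⊆ T :=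
  ⟨fun h => h.trans decR_subset_s12, fun h _ hp => ⟨h hp, hp.2⟩⟩

lemma inter_eq_incR_union_decR_of_wole (h : WOLE R S) : R ∩ S = IncR S ∪ DecR R := by
  apply Set.Subset.antisymm
  · rintro ⟨u, v⟩ ⟨hR, hS⟩
    rcases le_total u v with huv | hvu
    · exact Or.inl ⟨hS, huv⟩
    · exact Or.inr ⟨hR, hvu⟩
  · rintro p (hp | hp)
    · exact ⟨incR_subset_s12 (h.1 hp), incR_subset_s12 hp⟩
    · exact ⟨decR_subset_s12 hp, decR_subset_s12 (h.2 hp)⟩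

lemma incR_subset_incR_of_decR_subset_decR (hR : IsTotalRel R) (hS : IsAntisymRel S)
    (h : DecR R ⊆ DecR S) : IncR S ⊆ IncR R := by
  rintro ⟨u, v⟩ ⟨huv, hle⟩
  refine ⟨?_, hle⟩
  rcases hR u v with hR' | hvu
  · exact hR'
  · obtain rfl : u = v := hS u v huv (h ⟨hvu, hle⟩).1
    exact hvu

lemma decR_subset_decR_of_incR_subset_incR (hS : IsTotalRel S) (hR : IsAntisymRel R)
    (h : IncR S ⊆ IncR R) : DecR R ⊆ DecR S := by
  rintro ⟨u, v⟩ ⟨huv, hle⟩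
  refine ⟨?_, hle⟩
  rcases hS u v with hS' | hvu
  · exact hS'
  · obtain rfl : u = v := hR u v huv (h ⟨hvu, hle⟩).1
    exact hvu

lemma wole_iff_decR_subset_decR (hR : IsTotalRel R) (hS : IsAntisymRel S) :
    WOLE R S ↔ DecR R ⊆ DecR S :=
  ⟨And.right, fun h => ⟨incR_subset_incR_of_decR_subset_decR hR hS h, h⟩⟩

lemma wole_iff_incR_subset_incR (hS : IsTotalRel S) (hR : IsAntisymRel R) :
    WOLE R S ↔ IncR S ⊆ IncR R :=
  ⟨And.left, fun h => ⟨h, decR_subset_decR_of_incR_subset_incR hS hR h⟩⟩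

theorem wole_and_wole_iff_inter_subset (hR : IsTotalRel R) (hS : IsTotalRel S)
    (hT : IsAntisymRel T) (h : WOLE R S) :
    WOLE R T ∧ WOLE T S ↔ R ∩ S ⊆ T := by
  rw [wole_iff_decR_subset_decR hR hT, wole_iff_incR_subset_incR hS hT,
    inter_eq_incR_union_decR_of_wole h, Set.union_subset_iff, decR_subset_decR_iff,
    incR_subset_incR_iff, and_comm]

end Relations

section Permutations

variable {n : ℕ} (σ τ : Equiv.Perm (Fin n))

lemma isTotalRel_ordP : IsTotalRel (ordP σ) := fun u v => le_total (σ.symm u) (σ.symm v)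

lemma isAntisymRel_ordP : IsAntisymRel (ordP σ) := fun _ _ huv hvu =>
  σ.symm.injective (le_antisymm huv hvu)

lemma invP_eq_decR_ordP : invP σ = DecR (ordP σ) := Set.ext fun _ => and_comm

lemma invP_subset_invP_iff_wole : invP σ ⊆ invP τ ↔ WOLE (ordP σ) (ordP τ) := by
  rw [invP_eq_decR_ordP, invP_eq_decR_ordP,
    wole_iff_decR_subset_decR (isTotalRel_ordP σ) (isAntisymRel_ordP τ)]

end Permutations

/-- A permutation τ lies in the weak order interval [σ, σ'] iff its total order
is a linear extension of the poset ≺_σ ∩ ≺_σ' = Inc(≺_σ') ∪ Dec(≺_σ). -/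
theorem weakOrderIntervalPosets (n : ℕ) (σ σ' : Equiv.Perm (Fin n))
    (h : invP σ ⊆ invP σ') :
    ordP σ ∩ ordP σ' = IncR (ordP σ') ∪ DecR (ordP σ) ∧
    (∀ τ : Equiv.Perm (Fin n),
      (invP σ ⊆ invP τ ∧ invP τ ⊆ invP σ') ↔ ordP σ ∩ ordP σ' ⊆ ordP τ) := by
  have hw := (invP_subset_invP_iff_wole σ σ').1 h
  refine ⟨inter_eq_incR_union_decR_of_wole hw, fun τ => ?_⟩
  rw [invP_subset_invP_iff_wole, invP_subset_invP_iff_wole]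
  exact wole_and_wole_iff_inter_subset (isTotalRel_ordP σ) (isTotalRel_ordP σ')
    (isAntisymRel_ordP τ) hw
end

section
/- For any partial order ≺ on [n], the relation IWOIPid(≺) := ≺ \ {(a,c) : a < c and there exist a < b₁ < ... < b_k < c with a ⊀ b₁ ⊀ b₂ ⊀ ... ⊀ b_k ⊀ c} is a partial order satisfying the condition: for all a < b < c, a IWOIPid(≺) c implies a IWOIPid(≺) b or b IWOIPid(≺) c. -/
/-- The step relation for deletion chains: u < v and u, v not related in R. -/
def NRel {n : ℕ} (R : Set (Fin n × Fin n)) (u v : Fin n) : Prop :=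
  u < v ∧ (u, v) ∉ R

/-- The IWOIP increasing deletion: delete all (a,c) admitting an intermediate
chain a < b₁ < ... < b_k < c with a ⊀ b₁ ⊀ ... ⊀ b_k ⊀ c. -/
def IWOIPid {n : ℕ} (R : Set (Fin n × Fin n)) : Set (Fin n × Fin n) :=
  R \ {p | ∃ b : Fin n, NRel R p.1 b ∧ Relation.TransGen (NRel R) b p.2}

open Relation

section

variable {n : ℕ} {R : Set (Fin n × Fin n)} {a b c : Fin n}

lemma NRel.lt_of_transGen (h : TransGen (NRel R) a b) : a < b := by
  induction h with
  | single h => exact h.1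
  | tail _ h ih => exact ih.trans h.1

lemma not_mem_IWOIPid_of_transGen_of_transGen (hab : TransGen (NRel R) a b)
    (hbc : TransGen (NRel R) b c) : (a, c) ∉ IWOIPid R := by
  obtain ⟨b', hab', hb'b⟩ := TransGen.head'_iff.mp hab
  exact fun hac => hac.2 ⟨b', hab', TransGen.trans_right hb'b hbc⟩

lemma transGen_of_not_mem_IWOIPid (hab : a < b) (h : (a, b) ∉ IWOIPid R) :
    TransGen (NRel R) a b := by
  by_cases habR : (a, b) ∈ R
  · obtain ⟨b', hab', hb'b⟩ : ∃ b', NRel R a b' ∧ TransGen (NRel R) b' b := by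
      by_contra hchain
      exact h ⟨habR, hchain⟩
    exact hb'b.head hab'
  · exact .single ⟨hab, habR⟩

/-- No chain `x ⊀ ⋯ ⊀ y` can jump over a `v` with `x ≺ v ≺ y` in `IWOIPid R`. Inducting on the
chain from its head `x ⊀ b`, either `(b, v)` survives and we recurse, or the position of `v`
relative to `b` produces a chain deleting `(x, v)` or `(v, y)`, or contradicts `x ⊀ b`. -/
lemma not_transGen_of_mem_IWOIPid (htrans : IsTransRel R) {x v y : Fin n}
    (hxv : (x, v) ∈ IWOIPid R) (hvy : (v, y) ∈ IWOIPid R) : ¬TransGen (NRel R) x y := by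
  intro hxy
  induction hxy using TransGen.head_induction_on generalizing v with
  | single hxy => exact hxy.2 (htrans _ _ _ hxv.1 hvy.1)
  | @head x b hxb hby ih =>
    rcases lt_trichotomy b v with hbv | rfl | hvb
    · by_cases hbv' : (b, v) ∈ IWOIPid R
      · exact ih hbv' hvy
      · exact not_mem_IWOIPid_of_transGen_of_transGen (.single hxb)
          (transGen_of_not_mem_IWOIPid hbv hbv') hxv
    · exact hxb.2 hxv.1
    · by_cases hvbR : (v, b) ∈ R
      · exact hxb.2 (htrans _ _ _ hxv.1 hvbR)
      · exact not_mem_IWOIPid_of_transGen_of_transGen (.single ⟨hvb, hvbR⟩) hby hvy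

end

/-- The IWOIP increasing deletion of a poset is a poset in IWOIP(n). -/
theorem IWOIPid_mem_IWOIP (n : ℕ) (R : Set (Fin n × Fin n))
    (hrefl : IsReflRel R) (htrans : IsTransRel R) (hanti : IsAntisymRel R) :
    IsReflRel (IWOIPid R) ∧ IsTransRel (IWOIPid R) ∧ IsAntisymRel (IWOIPid R) ∧
    (∀ a b c : Fin n, a < b → b < c →
      (a, c) ∈ IWOIPid R → (a, b) ∈ IWOIPid R ∨ (b, c) ∈ IWOIPid R) := by
  refine ⟨?refl, ?trans, ?antisymm, ?interval⟩
  case refl =>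
    exact fun a => ⟨hrefl a, fun ⟨_, hab, hba⟩ => (hab.1.trans (NRel.lt_of_transGen hba)).false⟩
  case trans =>
    exact fun u v w huv hvw => ⟨htrans _ _ _ huv.1 hvw.1, fun ⟨_, hub, hbw⟩ =>
      not_transGen_of_mem_IWOIPid htrans huv hvw (hbw.head hub)⟩
  case antisymm =>
    exact fun u v huv hvu => hanti _ _ huv.1 hvu.1
  case interval =>
    intro a b c hab hbc hac
    by_contra! h
    exact not_mem_IWOIPid_of_transGen_of_transGen (transGen_of_not_mem_IWOIPid hab h.1)
      (transGen_of_not_mem_IWOIPid hbc h.2) hac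
end

section
/- The subposet of the weak order on partial orders on [n] induced by IWOIP(n) is a lattice, in which the meet of ≺ and ≺' equals their meet in the lattice of all posets, and the join equals IWOIPid applied to their join in the lattice of all posets. -/
/-- Membership in IWOIP(n). -/
def MemIWOIP {n : ℕ} (S : Set (Fin n × Fin n)) : Prop :=
  IsReflRel S ∧ IsTransRel S ∧ IsAntisymRel S ∧
    ∀ a b c : Fin n, a < b → b < c → (a, c) ∈ S → (a, b) ∈ S ∨ (b, c) ∈ S

/-! Write `I = tcR (IncR R ∪ IncR S)` and `D = DecR R ∩ DecR S`. When `I` is an increasing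
preorder and `D` is decreasing, `tddR (I ∪ D)` consists of the pairs of `I ∪ D` that stay in
`I ∪ D` after composing with `I` on both sides; with this description transitivity of the meet
is a short case analysis, and the decreasing pairs of any lower bound `T` survive because
`T ∩ (I ∪ D)` is closed under composition with `I`. The IWOIP condition passes from
`IncR R ∪ IncR S` to its transitive closure, hence to the meet.

Reversing `Fin n` exchanges `IncR` with `DecR` and `tddR` with `tidR`, and turns the meet of the
reversed relations into the join, so the join is the least upper bound among preorders.

For `a < c`, `IWOIPid J` drops `(a, c)` exactly when a chain `a < b₁ < ⋯ < c` of non-relations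
of `J` joins them. Such chains concatenate, which gives the IWOIP condition, and when `J` is
transitive a chain passing over `v` can be cut at `v`, which gives transitivity. An IWOIP
relation `T` above `J` has no such chain between the ends of one of its increasing pairs, so it
stays above `IWOIPid J`.
-/

variable {n : ℕ}

def IsPreorderRel (R : Set (Fin n × Fin n)) : Prop := IsReflRel R ∧ IsTransRel R

def IWOIPCond (R : Set (Fin n × Fin n)) : Prop :=
  ∀ a b c : Fin n, a < b → b < c → (a, c) ∈ R → (a, b) ∈ R ∨ (b, c) ∈ R

lemma MemIWOIP.isPreorderRel {R : Set (Fin n × Fin n)} (h : MemIWOIP R) : IsPreorderRel R :=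
  ⟨h.1, h.2.1⟩

lemma MemIWOIP.iwoipCond {R : Set (Fin n × Fin n)} (h : MemIWOIP R) : IWOIPCond R :=
  h.2.2.2

section TransitiveClosure

variable {X T : Set (Fin n × Fin n)}

lemma mem_tcR {x y : Fin n} :
    (x, y) ∈ tcR X ↔ Relation.TransGen (fun u v => (u, v) ∈ X) x y := Iff.rfl

lemma isTransRel_tcR_s17 : IsTransRel (tcR X) :=
  fun _ _ _ => Relation.TransGen.trans

lemma tcR_subset_s17 (hT : IsTransRel T) (h : X ⊆ T) : tcR X ⊆ T := by
  rintro ⟨x, y⟩ hxy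
  rw [mem_tcR] at hxy
  induction hxy with
  | single hxy => exact h hxy
  | tail _ hzy ih => exact hT _ _ _ ih (h hzy)

lemma le_of_mem_tcR (hX : ∀ p ∈ X, p.1 ≤ p.2) {x y : Fin n} (hxy : (x, y) ∈ tcR X) :
    x ≤ y := by
  rw [mem_tcR] at hxy
  induction hxy with
  | single hxy => exact hX _ hxy
  | tail _ hzy ih => exact ih.trans (hX _ hzy)

lemma IWOIPCond.tcR (hX : IWOIPCond X) : IWOIPCond (tcR X) := by
  intro a b c hab hbc hac
  rw [mem_tcR] at hac
  induction hac using Relation.TransGen.head_induction_on with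
  | @single a hac =>
    exact (hX a b c hab hbc hac).imp Relation.TransGen.single Relation.TransGen.single
  | @head a x hax hxc ih =>
    rcases lt_trichotomy x b with hxb | rfl | hbx
    · exact (ih hxb).imp_left (Relation.TransGen.head hax)
    · exact Or.inl (Relation.TransGen.single hax)
    · exact (hX a b x hab hbx hax).imp Relation.TransGen.single (Relation.TransGen.head · hxc)

end TransitiveClosure

lemma IWOIPCond.union {X Y : Set (Fin n × Fin n)} (hX : IWOIPCond X) (hY : IWOIPCond Y) :
    IWOIPCond (X ∪ Y) := by
  rintro a b c hab hbc (hac | hac)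
  · exact (hX a b c hab hbc hac).imp Or.inl Or.inl
  · exact (hY a b c hab hbc hac).imp Or.inr Or.inr

lemma IWOIPCond.incR {R : Set (Fin n × Fin n)} (hR : IWOIPCond R) : IWOIPCond (IncR R) :=
  fun a b c hab hbc hac =>
    (hR a b c hab hbc hac.1).imp (⟨·, hab.le⟩) (⟨·, hbc.le⟩)

section TransitiveDecreasingDeletion

variable {I D : Set (Fin n × Fin n)}

lemma mem_left_of_mem_union_of_le (hD : ∀ p ∈ D, p.2 ≤ p.1) (hI : IsReflRel I) {x y : Fin n}
    (h : (x, y) ∈ I ∪ D) (hxy : x ≤ y) : (x, y) ∈ I := by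
  rcases h with h | h
  · exact h
  · obtain rfl : x = y := le_antisymm hxy (hD _ h)
    exact hI x

lemma mem_right_of_mem_union_of_ge (hI : ∀ p ∈ I, p.1 ≤ p.2) (hD : IsReflRel D) {x y : Fin n}
    (h : (x, y) ∈ I ∪ D) (hyx : y ≤ x) : (x, y) ∈ D := by
  rcases h with h | h
  · obtain rfl : x = y := le_antisymm (hI _ h) hyx
    exact hD x
  · exact h

lemma mem_tddR_iff (hIle : ∀ p ∈ I, p.1 ≤ p.2) (hDge : ∀ p ∈ D, p.2 ≤ p.1)
    (hIr : IsReflRel I) (hIt : IsTransRel I) {x y : Fin n} :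
    (x, y) ∈ tddR (I ∪ D) ↔
      (x, y) ∈ I ∪ D ∧ ∀ i j, (i, x) ∈ I → (y, j) ∈ I → (i, j) ∈ I ∪ D := by
  constructor
  · rintro ⟨hxy, hkept⟩
    refine ⟨hxy, fun i j hix hyj => ?_⟩
    by_cases hyx : y ≤ x
    · by_contra hij
      exact hkept ⟨hyx, i, j, hIle _ hix, hIle _ hyj, Or.inl hix, hxy, Or.inl hyj, hij⟩
    · have hxyI : (x, y) ∈ I := hxy.resolve_right fun h => hyx (hDge _ h)
      exact Or.inl (hIt _ _ _ (hIt _ _ _ hix hxyI) hyj)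
  · rintro ⟨hxy, hcomp⟩
    refine ⟨hxy, ?_⟩
    rintro ⟨-, i, j, hix, hyj, hi, -, hj, hij⟩
    exact hij (hcomp i j (mem_left_of_mem_union_of_le hDge hIr hi hix)
      (mem_left_of_mem_union_of_le hDge hIr hj hyj))

lemma isTransRel_tddR (hIle : ∀ p ∈ I, p.1 ≤ p.2) (hDge : ∀ p ∈ D, p.2 ≤ p.1)
    (hIr : IsReflRel I) (hIt : IsTransRel I) (hDt : IsTransRel D) :
    IsTransRel (tddR (I ∪ D)) := by
  intro u v w huv hvw
  rw [mem_tddR_iff hIle hDge hIr hIt] at huv hvw ⊢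
  obtain ⟨huvM, huv⟩ := huv
  obtain ⟨hvwM, hvw⟩ := hvw
  have hcomp : ∀ i j, (i, u) ∈ I → (w, j) ∈ I → (i, j) ∈ I ∪ D := by
    intro i j hiu hwj
    rcases huvM with huvI | huvD
    · exact hvw i j (hIt _ _ _ hiu huvI) hwj
    rcases hvwM with hvwI | hvwD
    · exact huv i j hiu (hIt _ _ _ hvwI hwj)
    rcases huv i v hiu (hIr v) with hivI | hivD
    · exact hvw i j hivI hwj
    rcases hvw v j (hIr v) hwj with hvjI | hvjD
    · exact huv i j hiu hvjI
    exact Or.inr (hDt _ _ _ hivD hvjD)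
  exact ⟨hcomp u w (hIr u) (hIr w), hcomp⟩

end TransitiveDecreasingDeletion

section Meet

variable {R S T : Set (Fin n × Fin n)}

lemma le_of_mem_tcR_incR_union : ∀ p ∈ tcR (IncR R ∪ IncR S), p.1 ≤ p.2 := by
  rintro ⟨x, y⟩ h
  exact le_of_mem_tcR (by rintro p (hp | hp) <;> exact hp.2) h

lemma ge_of_mem_decR_inter : ∀ p ∈ DecR R ∩ DecR S, p.2 ≤ p.1 :=
  fun _ hp => hp.1.2

lemma IsReflRel.tcR_incR_union (hR : IsReflRel R) : IsReflRel (tcR (IncR R ∪ IncR S)) :=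
  fun a => Relation.TransGen.single (Or.inl ⟨hR a, le_rfl⟩)

lemma IsReflRel.decR_inter (hR : IsReflRel R) (hS : IsReflRel S) :
    IsReflRel (DecR R ∩ DecR S) :=
  fun a => ⟨⟨hR a, le_rfl⟩, hS a, le_rfl⟩

lemma IsTransRel.decR_inter (hR : IsTransRel R) (hS : IsTransRel S) :
    IsTransRel (DecR R ∩ DecR S) :=
  fun _ _ _ h₁ h₂ => ⟨⟨hR _ _ _ h₁.1.1 h₂.1.1, h₂.1.2.trans h₁.1.2⟩,
    hS _ _ _ h₁.2.1 h₂.2.1, h₂.2.2.trans h₁.2.2⟩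

lemma mem_meetT_iff (hR : IsReflRel R) {x y : Fin n} :
    (x, y) ∈ meetT R S ↔
      (x, y) ∈ tcR (IncR R ∪ IncR S) ∪ (DecR R ∩ DecR S) ∧
      ∀ i j, (i, x) ∈ tcR (IncR R ∪ IncR S) → (y, j) ∈ tcR (IncR R ∪ IncR S) →
        (i, j) ∈ tcR (IncR R ∪ IncR S) ∪ (DecR R ∩ DecR S) :=
  mem_tddR_iff le_of_mem_tcR_incR_union ge_of_mem_decR_inter hR.tcR_incR_union isTransRel_tcR_s17

lemma tcR_incR_union_subset_meetT (hR : IsReflRel R) : tcR (IncR R ∪ IncR S) ⊆ meetT R S := by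
  rintro ⟨x, y⟩ hxy
  refine (mem_meetT_iff hR).2 ⟨Or.inl hxy, fun i j hix hyj => Or.inl ?_⟩
  exact isTransRel_tcR_s17 _ _ _ (isTransRel_tcR_s17 _ _ _ hix hxy) hyj

lemma meetT_comm : meetT R S = meetT S R := by
  rw [meetT, meetT, Set.union_comm (IncR R), Set.inter_comm (DecR R)]

lemma IsPreorderRel.meetT (hR : IsPreorderRel R) (hS : IsTransRel S) :
    IsPreorderRel (meetT R S) :=
  ⟨fun a => tcR_incR_union_subset_meetT hR.1 (hR.1.tcR_incR_union a),
    isTransRel_tddR le_of_mem_tcR_incR_union ge_of_mem_decR_inter hR.1.tcR_incR_union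
      isTransRel_tcR_s17 (hR.2.decR_inter hS)⟩

lemma isAntisymRel_meetT (hR : IsReflRel R) (hS : IsReflRel S)
    (hRa : IsAntisymRel R) (hSa : IsAntisymRel S) : IsAntisymRel (meetT R S) := by
  suffices key : ∀ u v, u ≤ v → (u, v) ∈ meetT R S → (v, u) ∈ meetT R S → u = v by
    intro u v huv hvu
    rcases le_total u v with h | h
    · exact key u v h huv hvu
    · exact (key v u h hvu huv).symm
  intro u v hle huv hvu
  rw [mem_meetT_iff hR] at huv hvu
  have huvI := mem_left_of_mem_union_of_le ge_of_mem_decR_inter hR.tcR_incR_union huv.1 hle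
  suffices ∀ x, Relation.ReflTransGen (fun a b => (a, b) ∈ IncR R ∪ IncR S) x v →
      (u, x) ∈ tcR (IncR R ∪ IncR S) → x = v from
    this u huvI.to_reflTransGen (hR.tcR_incR_union u)
  -- Walking back from `v`, each step `(x, v)` of the chain meets `(v, x) ∈ DecR R ∩ DecR S`.
  intro x hxv
  induction hxv using Relation.ReflTransGen.head_induction_on with
  | refl => exact fun _ => rfl
  | @head x y hxy _ ih =>
    intro hux
    obtain rfl := ih (.tail hux hxy)
    have hyx : (y, x) ∈ DecR R ∩ DecR S :=
      mem_right_of_mem_union_of_ge le_of_mem_tcR_incR_union (hR.decR_inter hS)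
        (hvu.2 y x (hR.tcR_incR_union y) hux) (by rcases hxy with h | h <;> exact h.2)
    rcases hxy with hxy | hxy
    · exact hRa x y hxy.1 hyx.1.1
    · exact hSa x y hxy.1 hyx.2.1

lemma wole_meetT_left (hR : IsReflRel R) (hS : IsReflRel S) : WOLE (meetT R S) R := by
  constructor
  · rintro ⟨x, y⟩ hxy
    exact ⟨tcR_incR_union_subset_meetT hR (Relation.TransGen.single (Or.inl hxy)), hxy.2⟩
  · rintro ⟨x, y⟩ ⟨hxy, hyx⟩
    exact ⟨(mem_right_of_mem_union_of_ge le_of_mem_tcR_incR_union (hR.decR_inter hS)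
      ((mem_meetT_iff hR).1 hxy).1 hyx).1.1, hyx⟩

lemma wole_meetT_right (hR : IsReflRel R) (hS : IsReflRel S) : WOLE (meetT R S) S :=
  meetT_comm (R := R) ▸ wole_meetT_left hS hR

lemma incR_union_subset_of_wole (hTR : WOLE T R) (hTS : WOLE T S) : IncR R ∪ IncR S ⊆ T := by
  rintro p (hp | hp)
  exacts [(hTR.1 hp).1, (hTS.1 hp).1]

lemma mem_of_wole_of_mem_union (hTR : WOLE T R) (hTS : WOLE T S) {x y : Fin n}
    (hxyT : (x, y) ∈ T) (hxy : (x, y) ∈ R ∪ S) :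
    (x, y) ∈ tcR (IncR R ∪ IncR S) ∪ (DecR R ∩ DecR S) := by
  rcases le_total x y with hle | hle
  · exact Or.inl (Relation.TransGen.single (hxy.imp (⟨·, hle⟩) (⟨·, hle⟩)))
  · exact Or.inr ⟨hTR.2 ⟨hxyT, hle⟩, hTS.2 ⟨hxyT, hle⟩⟩

lemma mem_of_wole_of_step_right (hR : IsTransRel R) (hS : IsTransRel S) (hT : IsTransRel T)
    (hTR : WOLE T R) (hTS : WOLE T S) {x d y : Fin n}
    (hxd : (x, d) ∈ T ∩ (tcR (IncR R ∪ IncR S) ∪ (DecR R ∩ DecR S)))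
    (hdy : (d, y) ∈ IncR R ∪ IncR S) :
    (x, y) ∈ T ∩ (tcR (IncR R ∪ IncR S) ∪ (DecR R ∩ DecR S)) := by
  have hxyT := hT _ _ _ hxd.1 (incR_union_subset_of_wole hTR hTS hdy)
  refine ⟨hxyT, ?_⟩
  rcases hxd.2 with hxdI | ⟨hxdR, hxdS⟩
  · exact Or.inl (hxdI.tail hdy)
  · exact mem_of_wole_of_mem_union hTR hTS hxyT
      (hdy.imp (hR _ _ _ hxdR.1 ·.1) (hS _ _ _ hxdS.1 ·.1))

lemma mem_of_wole_of_step_left (hR : IsTransRel R) (hS : IsTransRel S) (hT : IsTransRel T)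
    (hTR : WOLE T R) (hTS : WOLE T S) {x d y : Fin n}
    (hxd : (x, d) ∈ IncR R ∪ IncR S)
    (hdy : (d, y) ∈ T ∩ (tcR (IncR R ∪ IncR S) ∪ (DecR R ∩ DecR S))) :
    (x, y) ∈ T ∩ (tcR (IncR R ∪ IncR S) ∪ (DecR R ∩ DecR S)) := by
  have hxyT := hT _ _ _ (incR_union_subset_of_wole hTR hTS hxd) hdy.1
  refine ⟨hxyT, ?_⟩
  rcases hdy.2 with hdyI | ⟨hdyR, hdyS⟩
  · exact Or.inl (hdyI.head hxd)
  · exact mem_of_wole_of_mem_union hTR hTS hxyT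
      (hxd.imp (hR _ _ _ ·.1 hdyR.1) (hS _ _ _ ·.1 hdyS.1))

lemma wole_meetT (hR : IsPreorderRel R) (hS : IsTransRel S) (hT : IsTransRel T)
    (hTR : WOLE T R) (hTS : WOLE T S) : WOLE T (meetT R S) := by
  have hIT := tcR_subset_s17 hT (incR_union_subset_of_wole hTR hTS)
  constructor
  · rintro ⟨x, y⟩ ⟨hxy, hle⟩
    exact ⟨hIT (mem_left_of_mem_union_of_le ge_of_mem_decR_inter hR.1.tcR_incR_union
      ((mem_meetT_iff hR.1).1 hxy).1 hle), hle⟩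
  rintro ⟨b, a⟩ ⟨hba, hle⟩
  have hbaD : (b, a) ∈ DecR R ∩ DecR S := ⟨hTR.2 ⟨hba, hle⟩, hTS.2 ⟨hba, hle⟩⟩
  refine ⟨(mem_meetT_iff hR.1).2 ⟨Or.inr hbaD, fun i j hib haj => ?_⟩, hle⟩
  have hbj : (b, j) ∈ T ∩ (tcR (IncR R ∪ IncR S) ∪ (DecR R ∩ DecR S)) := by
    rw [mem_tcR] at haj
    induction haj with
    | single h => exact mem_of_wole_of_step_right hR.2 hS hT hTR hTS ⟨hba, Or.inr hbaD⟩ h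
    | tail _ h ih => exact mem_of_wole_of_step_right hR.2 hS hT hTR hTS ih h
  suffices (i, j) ∈ T ∩ (tcR (IncR R ∪ IncR S) ∪ (DecR R ∩ DecR S)) from this.2
  rw [mem_tcR] at hib
  induction hib using Relation.TransGen.head_induction_on with
  | single h => exact mem_of_wole_of_step_left hR.2 hS hT hTR hTS h hbj
  | head h _ ih => exact mem_of_wole_of_step_left hR.2 hS hT hTR hTS h ih

lemma IWOIPCond.meetT (hRr : IsReflRel R) (hR : IWOIPCond R) (hS : IWOIPCond S) :
    IWOIPCond (meetT R S) := by
  intro a b c hab hbc hac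
  have hacI := ((mem_meetT_iff hRr).1 hac).1.resolve_right
    fun h => (hab.trans hbc).not_ge (ge_of_mem_decR_inter _ h)
  exact ((hR.incR.union hS.incR).tcR a b c hab hbc hacI).imp
    (tcR_incR_union_subset_meetT hRr ·) (tcR_incR_union_subset_meetT hRr ·)

lemma MemIWOIP.meetT (hR : MemIWOIP R) (hS : MemIWOIP S) : MemIWOIP (meetT R S) :=
  have hRS := hR.isPreorderRel.meetT hS.2.1
  ⟨hRS.1, hRS.2, isAntisymRel_meetT hR.1 hS.1 hR.2.2.1 hS.2.2.1,
    hR.iwoipCond.meetT hR.1 hS.iwoipCond⟩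

end Meet

section Reversal

def revRel (R : Set (Fin n × Fin n)) : Set (Fin n × Fin n) := Prod.map Fin.rev Fin.rev ⁻¹' R

variable {R S T : Set (Fin n × Fin n)}

@[simp] lemma mem_revRel {a b : Fin n} : (a, b) ∈ revRel R ↔ (a.rev, b.rev) ∈ R := Iff.rfl

@[simp] lemma revRel_revRel : revRel (revRel R) = R := by
  ext ⟨a, b⟩; simp

lemma revRel_union : revRel (R ∪ S) = revRel R ∪ revRel S := rfl

lemma revRel_inter : revRel (R ∩ S) = revRel R ∩ revRel S := rfl

lemma revRel_subset_revRel_iff : revRel R ⊆ revRel S ↔ R ⊆ S := by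
  refine ⟨fun h ⟨a, b⟩ hab => ?_, fun h _ hp => h hp⟩
  simpa using @h (a.rev, b.rev) (by simpa using hab)

lemma incR_revRel : IncR (revRel R) = revRel (DecR R) := by
  ext ⟨a, b⟩; simp [IncR, DecR]

lemma decR_revRel : DecR (revRel R) = revRel (IncR R) := by
  ext ⟨a, b⟩; simp [IncR, DecR]

lemma tcR_revRel : tcR (revRel R) = revRel (tcR R) := by
  ext ⟨a, b⟩
  refine ⟨fun h => Relation.TransGen.lift Fin.rev (fun _ _ h => h) _ _ h, fun h => ?_⟩
  have := Relation.TransGen.lift (p := fun u v => (u, v) ∈ revRel R) Fin.rev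
    (fun x y (h : (x, y) ∈ R) => by simpa [Function.onFun] using h) _ _ h
  simpa [Function.onFun, tcR, revRel] using this

lemma tddR_revRel : tddR (revRel R) = revRel (tidR R) := by
  ext ⟨a, b⟩
  simp only [tddR, tidR, Set.mem_sdiff, mem_revRel, Set.mem_ofPred_eq]
  conv_rhs => rw [Fin.rev_surjective.exists₂]
  simp only [Fin.rev_le_rev]

lemma joinT_eq_revRel_meetT : joinT R S = revRel (meetT (revRel R) (revRel S)) := by
  rw [meetT, incR_revRel, incR_revRel, decR_revRel, decR_revRel, ← revRel_union, tcR_revRel,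
    ← revRel_inter, ← revRel_union, tddR_revRel, revRel_revRel, joinT, Set.union_comm]

lemma wole_revRel_iff : WOLE (revRel R) (revRel S) ↔ WOLE S R := by
  rw [WOLE, WOLE, incR_revRel, incR_revRel, decR_revRel, decR_revRel, revRel_subset_revRel_iff,
    revRel_subset_revRel_iff, and_comm]

lemma IsReflRel.revRel (h : IsReflRel R) : IsReflRel (revRel R) :=
  fun a => h a.rev

lemma IsTransRel.revRel (h : IsTransRel R) : IsTransRel (revRel R) :=
  fun _ _ _ => h _ _ _

lemma IsAntisymRel.revRel (h : IsAntisymRel R) : IsAntisymRel (revRel R) :=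
  fun _ _ huv hvu => Fin.rev_injective (h _ _ huv hvu)

lemma IsPreorderRel.revRel (h : IsPreorderRel R) : IsPreorderRel (revRel R) :=
  ⟨h.1.revRel, h.2.revRel⟩

lemma IsPreorderRel.joinT (hR : IsPreorderRel R) (hS : IsTransRel S) :
    IsPreorderRel (joinT R S) := by
  rw [joinT_eq_revRel_meetT]
  exact (hR.revRel.meetT hS.revRel).revRel

lemma isAntisymRel_joinT (hR : IsReflRel R) (hS : IsReflRel S)
    (hRa : IsAntisymRel R) (hSa : IsAntisymRel S) : IsAntisymRel (joinT R S) := by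
  rw [joinT_eq_revRel_meetT]
  exact (isAntisymRel_meetT hR.revRel hS.revRel hRa.revRel hSa.revRel).revRel

lemma wole_joinT_left (hR : IsReflRel R) (hS : IsReflRel S) : WOLE R (joinT R S) := by
  rw [joinT_eq_revRel_meetT, ← wole_revRel_iff, revRel_revRel]
  exact wole_meetT_left hR.revRel hS.revRel

lemma wole_joinT_right (hR : IsReflRel R) (hS : IsReflRel S) : WOLE S (joinT R S) := by
  rw [joinT_eq_revRel_meetT, ← wole_revRel_iff, revRel_revRel]
  exact wole_meetT_right hR.revRel hS.revRel

lemma joinT_wole (hR : IsPreorderRel R) (hS : IsTransRel S) (hT : IsTransRel T)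
    (hRT : WOLE R T) (hST : WOLE S T) : WOLE (joinT R S) T := by
  rw [joinT_eq_revRel_meetT, ← wole_revRel_iff, revRel_revRel]
  exact wole_meetT hR.revRel hS.revRel hT.revRel
    (wole_revRel_iff.2 hRT) (wole_revRel_iff.2 hST)

end Reversal

section IWOIPDeletion

variable {J R T : Set (Fin n × Fin n)}

lemma lt_of_transGen_nrel {a c : Fin n} (h : Relation.TransGen (NRel J) a c) : a < c :=
  Relation.TransGen.trans_induction_on h (fun h => h.1) fun _ _ => lt_trans

lemma mem_IWOIPid_iff {a c : Fin n} :
    (a, c) ∈ IWOIPid J ↔ (a, c) ∈ J ∧ ¬Relation.TransGen (NRel J) a c := by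
  refine and_congr_right fun hac =>
    not_congr ⟨fun ⟨b, hab, hbc⟩ => hbc.head hab, fun h => ?_⟩
  obtain ⟨b, hab, hbc⟩ := Relation.TransGen.head'_iff.1 h
  rcases Relation.reflTransGen_iff_eq_or_transGen.1 hbc with rfl | hbc
  · exact absurd hac hab.2
  · exact ⟨b, hab, hbc⟩

lemma transGen_nrel_of_not_mem_IWOIPid {a c : Fin n} (hac : a < c) (h : (a, c) ∉ IWOIPid J) :
    Relation.TransGen (NRel J) a c := by
  by_cases hJ : (a, c) ∈ J
  · simpa [mem_IWOIPid_iff, hJ] using h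
  · exact .single ⟨hac, hJ⟩

lemma transGen_nrel_split (hJ : IsTransRel J) {u v w : Fin n}
    (h : Relation.TransGen (NRel J) u w) (huv : u < v) (hvw : v < w) :
    Relation.TransGen (NRel J) u v ∨ Relation.TransGen (NRel J) v w := by
  induction h with
  | single huw =>
    by_cases hJuv : (u, v) ∈ J
    · exact Or.inr (.single ⟨hvw, fun hJvw => huw.2 (hJ _ _ _ hJuv hJvw)⟩)
    · exact Or.inl (.single ⟨huv, hJuv⟩)
  | @tail y w huy hyw ih =>
    rcases lt_trichotomy v y with hvy | rfl | hyv
    · exact (ih hvy).imp_right (·.tail hyw)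
    · exact Or.inl huy
    · by_cases hJyv : (y, v) ∈ J
      · exact Or.inr (.single ⟨hvw, fun hJvw => hyw.2 (hJ _ _ _ hJyv hJvw)⟩)
      · exact Or.inl (huy.tail ⟨hyv, hJyv⟩)

lemma transGen_nrel_of_mem_of_le_left (hJ : IsTransRel J) {u v w : Fin n} (huv : (u, v) ∈ J)
    (hvu : v ≤ u) (h : Relation.TransGen (NRel J) u w) : Relation.TransGen (NRel J) v w := by
  obtain ⟨b, hub, hbw⟩ := Relation.TransGen.head'_iff.1 h
  exact .head' ⟨hvu.trans_lt hub.1, fun hvb => hub.2 (hJ _ _ _ huv hvb)⟩ hbw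

lemma transGen_nrel_of_mem_of_le_right (hJ : IsTransRel J) {u v w : Fin n} (hvw : (v, w) ∈ J)
    (hwv : w ≤ v) (h : Relation.TransGen (NRel J) u w) : Relation.TransGen (NRel J) u v := by
  obtain ⟨b, hub, hbw⟩ := Relation.TransGen.tail'_iff.1 h
  exact .tail' hub ⟨hbw.1.trans_le hwv, fun hbv => hbw.2 (hJ _ _ _ hbv hvw)⟩

lemma IsReflRel.IWOIPid (hJ : IsReflRel J) : IsReflRel (IWOIPid J) :=
  fun a => mem_IWOIPid_iff.2 ⟨hJ a, fun h => (lt_of_transGen_nrel h).false⟩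

lemma IsTransRel.IWOIPid (hJ : IsTransRel J) : IsTransRel (IWOIPid J) := by
  intro u v w huv hvw
  rw [mem_IWOIPid_iff] at huv hvw ⊢
  refine ⟨hJ _ _ _ huv.1 hvw.1, fun huw => ?_⟩
  rcases le_or_gt v u with hvu | hlt_uv
  · exact hvw.2 (transGen_nrel_of_mem_of_le_left hJ huv.1 hvu huw)
  rcases le_or_gt w v with hwv | hlt_vw
  · exact huv.2 (transGen_nrel_of_mem_of_le_right hJ hvw.1 hwv huw)
  rcases transGen_nrel_split hJ huw hlt_uv hlt_vw with h | h
  exacts [huv.2 h, hvw.2 h]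

lemma IsAntisymRel.IWOIPid (hJ : IsAntisymRel J) : IsAntisymRel (IWOIPid J) :=
  fun u v huv hvu => hJ u v huv.1 hvu.1

lemma iwoipCond_IWOIPid : IWOIPCond (IWOIPid J) := by
  intro a b c hab hbc hac
  by_contra! h
  exact (mem_IWOIPid_iff.1 hac).2 ((transGen_nrel_of_not_mem_IWOIPid hab h.1).trans
    (transGen_nrel_of_not_mem_IWOIPid hbc h.2))

lemma memIWOIP_IWOIPid (hJ : IsPreorderRel J) (hJa : IsAntisymRel J) : MemIWOIP (IWOIPid J) :=
  ⟨hJ.1.IWOIPid, hJ.2.IWOIPid, hJa.IWOIPid, iwoipCond_IWOIPid⟩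

lemma WOLE.IWOIPid_right (h : WOLE R J) : WOLE R (IWOIPid J) := by
  refine ⟨fun p hp => h.1 ⟨hp.1.1, hp.2⟩, ?_⟩
  rintro ⟨x, y⟩ hxy
  obtain ⟨hxyJ, hyx⟩ := h.2 hxy
  exact ⟨mem_IWOIPid_iff.2 ⟨hxyJ, fun h => hyx.not_gt (lt_of_transGen_nrel h)⟩, hyx⟩

lemma not_transGen_nrel_of_mem (hT : IWOIPCond T) (hTJ : IncR T ⊆ IncR J) {a c : Fin n}
    (hac : (a, c) ∈ T) : ¬Relation.TransGen (NRel J) a c := by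
  intro h
  induction h using Relation.TransGen.head_induction_on with
  | single hac' => exact hac'.2 (hTJ ⟨hac, hac'.1.le⟩).1
  | @head a b hab hbc ih =>
    rcases hT a b _ hab.1 (lt_of_transGen_nrel hbc) hac with h | h
    · exact hab.2 (hTJ ⟨h, hab.1.le⟩).1
    · exact ih h

lemma WOLE.IWOIPid_left (hT : IWOIPCond T) (h : WOLE J T) : WOLE (IWOIPid J) T := by
  refine ⟨?_, fun p hp => h.2 ⟨hp.1.1, hp.2⟩⟩
  rintro ⟨a, c⟩ hac
  exact ⟨mem_IWOIPid_iff.2 ⟨(h.1 hac).1, not_transGen_nrel_of_mem hT h.1 hac.1⟩, hac.2⟩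

end IWOIPDeletion

/-- The subposet of the weak order induced by IWOIP(n) is a lattice: its meet is
the meet of the lattice of posets, and its join is IWOIPid applied to the join
of the lattice of posets. -/
theorem IWOIP_lattice (n : ℕ) (R S : Set (Fin n × Fin n))
    (hR : MemIWOIP R) (hS : MemIWOIP S) :
    (MemIWOIP (meetT R S) ∧ WOLE (meetT R S) R ∧ WOLE (meetT R S) S ∧
      (∀ T : Set (Fin n × Fin n), MemIWOIP T → WOLE T R → WOLE T S →
        WOLE T (meetT R S))) ∧
    (MemIWOIP (IWOIPid (joinT R S)) ∧
      WOLE R (IWOIPid (joinT R S)) ∧ WOLE S (IWOIPid (joinT R S)) ∧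
      (∀ T : Set (Fin n × Fin n), MemIWOIP T → WOLE R T → WOLE S T →
        WOLE (IWOIPid (joinT R S)) T)) := by
  have hRp := hR.isPreorderRel
  refine ⟨⟨hR.meetT hS, wole_meetT_left hR.1 hS.1, wole_meetT_right hR.1 hS.1, ?_⟩,
    ⟨?_, (wole_joinT_left hR.1 hS.1).IWOIPid_right,
      (wole_joinT_right hR.1 hS.1).IWOIPid_right, ?_⟩⟩
  · exact fun T hT hTR hTS => wole_meetT hRp hS.2.1 hT.2.1 hTR hTS
  · exact memIWOIP_IWOIPid (hRp.joinT hS.2.1) (isAntisymRel_joinT hR.1 hS.1 hR.2.2.1 hS.2.2.1)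
  · exact fun T hT hRT hST =>
      (joinT_wole hRp hS.2.1 hT.2.1 hRT hST).IWOIPid_left hT.iwoipCond
end
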